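/- arXiv:2201.10031 — 6 statements merged into one kernel-verified Lean document; each statement's English description precedes it below -/
import Mathlib

section
/- Let X be an infinite-dimensional Banach space with a 1-unconditional Schauder basis {xₙ} with coordinate functionals {xₙ*}. Define T ∈ L(X) by T xₙ = xₙ/n. Then T is compact, injective, has Crawford number c(T) = 0, but T does not attain its Crawford number: there is no (x₀, x₀*) ∈ Π(X) with x₀*(T x₀) = 0. -/
noncomputable def crawford {𝕜 : Type*} [RCLike 𝕜] {E : Type*} [NormedAddCommGroup E]
    [NormedSpace 𝕜 E] (T : E →L[𝕜] E) : ℝ :=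
  sInf {r : ℝ | ∃ (x : E) (f : E →L[𝕜] 𝕜), ‖x‖ = 1 ∧ ‖f‖ = 1 ∧ f x = 1 ∧ r = ‖f (T x)‖}

def CrawfordAttains {𝕜 : Type*} [RCLike 𝕜] {E : Type*} [NormedAddCommGroup E]
    [NormedSpace 𝕜 E] (T : E →L[𝕜] E) : Prop :=
  ∃ (x : E) (f : E →L[𝕜] 𝕜), ‖x‖ = 1 ∧ ‖f‖ = 1 ∧ f x = 1 ∧ crawford T = ‖f (T x)‖

open Filter in
theorem crawford_not_attained_diagonal_operator
    {𝕜 : Type*} [RCLike 𝕜] {X : Type*} [NormedAddCommGroup X] [NormedSpace 𝕜 X]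
    [CompleteSpace X] (hX : ¬ FiniteDimensional 𝕜 X)
    (e : ℕ → X) (f : ℕ → (X →L[𝕜] 𝕜))
    (hbiorth : ∀ n m : ℕ, f m (e n) = if n = m then 1 else 0)
    (hbasis : ∀ x : X,
      Tendsto (fun N => ∑ n ∈ Finset.range N, f n x • e n) atTop (nhds x))
    (huncond : ∀ θ : ℕ → ℝ, (∀ n, θ n = 1 ∨ θ n = -1) →
      ∃ S : X →L[𝕜] X, ‖S‖ ≤ 1 ∧ ∀ n, S (e n) = ((θ n : 𝕜) • e n))
    (T : X →L[𝕜] X) (hT : ∀ n : ℕ, T (e n) = ((n : 𝕜) + 1)⁻¹ • e n) :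
    IsCompactOperator T ∧ Function.Injective T ∧ crawford T = 0 ∧
      ¬ CrawfordAttains T := by
  classical
  -- the real weights and 𝕜 weights
  set w : ℕ → ℝ := fun n => ((n : ℝ) + 1)⁻¹ with hw
  set c : ℕ → 𝕜 := fun n => ((n : 𝕜) + 1)⁻¹ with hc
  have hcw : ∀ n, c n = ((w n : ℝ) : 𝕜) := by
    intro n; simp [hw, hc]
  have hwpos : ∀ n, 0 < w n := by
    intro n; positivity
  have hcne : ∀ n, c n ≠ 0 := by
    intro n; rw [hcw]; simp [(hwpos n).ne']
  have hcnorm : ∀ n, ‖c n‖ = w n := by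
    intro n; rw [hcw]; rw [RCLike.norm_ofReal, abs_of_pos (hwpos n)]
  have hwanti : ∀ m n, m ≤ n → w n ≤ w m := by
    intro m n h
    apply inv_anti₀ (by positivity)
    have : (m:ℝ) ≤ n := by exact_mod_cast h
    linarith
  -- partial sum projections
  set P : ℕ → X →L[𝕜] X := fun N => ∑ n ∈ Finset.range N, (f n).smulRight (e n) with hP
  have hPapply : ∀ N x, P N x = ∑ n ∈ Finset.range N, f n x • e n := by
    intro N x
    simp [hP, ContinuousLinearMap.sum_apply]
  have hPx : ∀ x, Tendsto (fun N => P N x) atTop (nhds x) := by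
    intro x; simpa only [hPapply] using hbasis x
  obtain ⟨C₀, hC₀⟩ : ∃ C', ∀ N, ‖P N‖ ≤ C' := by
    apply banach_steinhaus
    intro x
    obtain ⟨C, hC⟩ := ((hPx x).norm).bddAbove_range
    exact ⟨C, fun N => hC ⟨N, rfl⟩⟩
  set C : ℝ := max C₀ 1 with hCdef
  have hC1 : (1:ℝ) ≤ C := le_max_right _ _
  have hC : ∀ N, ‖P N‖ ≤ C := fun N => (hC₀ N).trans (le_max_left _ _)
  have hC0 : (0:ℝ) ≤ C := zero_le_one.trans hC1
  -- T composed with partial sums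
  have hTP : ∀ N, T.comp (P N) = ∑ n ∈ Finset.range N, c n • (f n).smulRight (e n) := by
    intro N
    ext x
    simp only [ContinuousLinearMap.comp_apply, hPapply, map_sum, map_smul,
      ContinuousLinearMap.sum_apply, ContinuousLinearMap.smul_apply,
      ContinuousLinearMap.smulRight_apply, hT]
    exact Finset.sum_congr rfl fun n _ => smul_comm _ _ _
  -- Abel summation expression
  have habel : ∀ N, T.comp (P N)
      = c (N-1) • P N - ∑ i ∈ Finset.range (N-1), (c (i+1) - c i) • P (i+1) := by
    intro N
    rw [hTP, Finset.sum_range_by_parts]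
  -- uniform bound on differences
  have hdiff : ∀ N M : ℕ, 1 ≤ N → N ≤ M →
      ‖T.comp (P M) - T.comp (P N)‖ ≤ 2 * w (N-1) * C := by
    intro N M hN hNM
    have hNM' : N - 1 ≤ M - 1 := Nat.sub_le_sub_right hNM 1
    rw [habel, habel]
    have hsplit : ∑ i ∈ Finset.range (M-1), (c (i+1) - c i) • P (i+1)
        = (∑ i ∈ Finset.range (N-1), (c (i+1) - c i) • P (i+1))
          + ∑ i ∈ Finset.Ico (N-1) (M-1), (c (i+1) - c i) • P (i+1) := by
      rw [Finset.sum_Ico_eq_sub _ hNM']; abel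
    have hnormdiff : ∀ i : ℕ, ‖c (i+1) - c i‖ = w i - w (i+1) := by
      intro i
      rw [hcw, hcw, ← RCLike.ofReal_sub, RCLike.norm_ofReal, abs_sub_comm,
        abs_of_nonneg (sub_nonneg.2 (hwanti i (i+1) (Nat.le_succ i)))]
    have e1 : c (M-1) • P M - ∑ i ∈ Finset.range (M-1), (c (i+1) - c i) • P (i+1)
        - (c (N-1) • P N - ∑ i ∈ Finset.range (N-1), (c (i+1) - c i) • P (i+1))
        = (c (M-1) • P M - c (N-1) • P N)
          - ∑ i ∈ Finset.Ico (N-1) (M-1), (c (i+1) - c i) • P (i+1) := by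
      rw [hsplit]; abel
    rw [e1]
    have b1 : ‖c (M-1) • P M - c (N-1) • P N‖ ≤ w (M-1) * C + w (N-1) * C := by
      refine (norm_sub_le _ _).trans (add_le_add ?_ ?_) <;>
        · refine (ContinuousLinearMap.opNorm_smul_le _ _).trans ?_
          rw [hcnorm]
          exact mul_le_mul_of_nonneg_left (hC _) (hwpos _).le
    have b2 : ‖∑ i ∈ Finset.Ico (N-1) (M-1), (c (i+1) - c i) • P (i+1)‖
        ≤ (w (N-1) - w (M-1)) * C := by
      refine (norm_sum_le _ _).trans ?_
      have : ∀ i ∈ Finset.Ico (N-1) (M-1), ‖(c (i+1) - c i) • P (i+1)‖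
          ≤ (w i - w (i+1)) * C := by
        intro i _
        refine (ContinuousLinearMap.opNorm_smul_le _ _).trans ?_
        rw [hnormdiff]
        exact mul_le_mul_of_nonneg_left (hC _)
          (sub_nonneg.2 (hwanti i (i+1) (Nat.le_succ i)))
      refine (Finset.sum_le_sum this).trans ?_
      rw [← Finset.sum_mul]
      have htel : ∑ i ∈ Finset.Ico (N-1) (M-1), (w i - w (i+1)) = w (N-1) - w (M-1) := by
        rw [Finset.sum_Ico_eq_sub _ hNM', Finset.sum_range_sub' w, Finset.sum_range_sub' w]
        ring
      rw [htel]
    calc ‖(c (M-1) • P M - c (N-1) • P N)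
          - ∑ i ∈ Finset.Ico (N-1) (M-1), (c (i+1) - c i) • P (i+1)‖
        ≤ ‖c (M-1) • P M - c (N-1) • P N‖
          + ‖∑ i ∈ Finset.Ico (N-1) (M-1), (c (i+1) - c i) • P (i+1)‖ := norm_sub_le _ _
      _ ≤ (w (M-1) * C + w (N-1) * C) + (w (N-1) - w (M-1)) * C := add_le_add b1 b2
      _ = 2 * w (N-1) * C + (w (M-1) - w (M-1)) * C := by ring
      _ = 2 * w (N-1) * C := by ring
  -- operator norm bound on T - T∘P N
  have hTbound : ∀ N : ℕ, 1 ≤ N → ‖T - T.comp (P N)‖ ≤ 2 * w (N-1) * C := by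
    intro N hN
    refine ContinuousLinearMap.opNorm_le_bound _ (by positivity) fun x => ?_
    have h1 : Tendsto (fun M => ‖(T.comp (P M) - T.comp (P N)) x‖) atTop
        (nhds ‖(T - T.comp (P N)) x‖) := by
      have h2 : Tendsto (fun M => T (P M x)) atTop (nhds (T x)) :=
        (T.continuous.tendsto _).comp (hPx x)
      have h3 : Tendsto (fun M => T (P M x) - T (P N x)) atTop
          (nhds (T x - T (P N x))) := h2.sub tendsto_const_nhds
      simpa using h3.norm
    refine le_of_tendsto h1 ?_
    filter_upwards [eventually_ge_atTop N] with M hM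
    calc ‖(T.comp (P M) - T.comp (P N)) x‖
        ≤ ‖T.comp (P M) - T.comp (P N)‖ * ‖x‖ :=
          ContinuousLinearMap.le_opNorm _ _
      _ ≤ 2 * w (N-1) * C * ‖x‖ :=
          mul_le_mul_of_nonneg_right (hdiff N M hN hM) (norm_nonneg x)
  -- T is the operator-norm limit of T ∘ P N
  have hTlim : Tendsto (fun N => T.comp (P N)) atTop (nhds T) := by
    rw [tendsto_iff_norm_sub_tendsto_zero]
    refine squeeze_zero' (g := fun N : ℕ => 2 * C / (N:ℝ))
      (Eventually.of_forall fun N => norm_nonneg _) ?_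
      (tendsto_const_div_atTop_nhds_zero_nat (2*C))
    filter_upwards [eventually_ge_atTop 1] with N hN
    rw [norm_sub_rev]
    have hcast : ((N-1:ℕ):ℝ) + 1 = N := by
      have h := Nat.sub_add_cancel hN
      exact_mod_cast congrArg (Nat.cast : ℕ → ℝ) h
    have hwN : w (N-1) = (N:ℝ)⁻¹ := by rw [hw]; simp only []; rw [hcast]
    calc ‖T - T.comp (P N)‖ ≤ 2 * w (N-1) * C := hTbound N hN
      _ = 2 * C / N := by rw [hwN]; ring
  -- each T ∘ P N is a compact operator (finite rank)
  have hQcomp : ∀ (g : X →L[𝕜] 𝕜) (y : X), IsCompactOperator ⇑(g.smulRight y) := by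
    intro g y
    refine ⟨(fun a : 𝕜 => a • y) '' Metric.closedBall 0 ‖g‖,
      (isCompact_closedBall 0 ‖g‖).image (continuous_id.smul continuous_const), ?_⟩
    refine mem_of_superset (Metric.closedBall_mem_nhds (0:X) one_pos) fun x hx => ?_
    refine ⟨g x, ?_, rfl⟩
    rw [Metric.mem_closedBall, dist_zero_right]
    simpa using g.unit_le_opNorm x (mem_closedBall_zero_iff.mp hx)
  have hsumcomp : ∀ (s : Finset ℕ) (F : ℕ → X →L[𝕜] X),
      (∀ i ∈ s, IsCompactOperator ⇑(F i)) → IsCompactOperator ⇑(∑ i ∈ s, F i) := by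
    intro s
    induction s using Finset.cons_induction with
    | empty => intro F _; simpa using isCompactOperator_zero
    | cons a s ha ih =>
      intro F hF
      rw [Finset.sum_cons]
      have : ⇑(F a + ∑ i ∈ s, F i) = ⇑(F a) + ⇑(∑ i ∈ s, F i) := rfl
      rw [this]
      exact (hF a (Finset.mem_cons_self a s)).add
        (ih F fun i hi => hF i (Finset.mem_cons_of_mem hi))
  have hTPcomp : ∀ N, IsCompactOperator ⇑(T.comp (P N)) := by
    intro N
    rw [hTP]
    refine hsumcomp _ _ fun n _ => ?_
    have : ⇑(c n • (f n).smulRight (e n)) = c n • ⇑((f n).smulRight (e n)) := rfl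
    rw [this]
    exact (hQcomp (f n) (e n)).smul (c n)
  have hTcomp : IsCompactOperator ⇑T :=
    isCompactOperator_of_tendsto hTlim (Eventually.of_forall hTPcomp)
  -- coordinate identity for T
  have hfT : ∀ (m : ℕ) (x : X), f m (T x) = c m * f m x := by
    intro m x
    have h1 : Tendsto (fun N => f m (T (P N x))) atTop (nhds (f m (T x))) :=
      ((f m).continuous.tendsto _).comp ((T.continuous.tendsto _).comp (hPx x))
    have h2 : ∀ N, m < N → f m (T (P N x)) = c m * f m x := by
      intro N hmN
      rw [hPapply, map_sum, map_sum]
      have : ∀ n, f m (T (f n x • e n)) = f n x * (c n * f m (e n)) := by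
        intro n
        rw [map_smul, map_smul, hT, map_smul]
        simp [smul_eq_mul, hc]
      simp only [this, hbiorth]
      rw [Finset.sum_eq_single m]
      · simp [mul_comm]
      · intro n _ hnm; simp [hnm]
      · intro h; exact absurd (Finset.mem_range.2 hmN) h
    have h3 : Tendsto (fun N => f m (T (P N x))) atTop (nhds (c m * f m x)) := by
      refine Tendsto.congr' ?_ tendsto_const_nhds
      filter_upwards [eventually_gt_atTop m] with N hN
      exact (h2 N hN).symm
    exact tendsto_nhds_unique h1 h3
  -- injectivity
  have hinj : Function.Injective T := by
    intro x y hxy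
    have hcoef : ∀ n, f n x = f n y := by
      intro n
      have h := congrArg (f n) hxy
      rw [hfT, hfT] at h
      exact mul_left_cancel₀ (hcne n) h
    have : Tendsto (fun N => ∑ n ∈ Finset.range N, f n x • e n) atTop (nhds y) := by
      simpa only [hcoef] using hbasis y
    exact tendsto_nhds_unique (hbasis x) this
  -- the crawford set
  set A : Set ℝ := {r : ℝ | ∃ (x : X) (g : X →L[𝕜] 𝕜),
    ‖x‖ = 1 ∧ ‖g‖ = 1 ∧ g x = 1 ∧ r = ‖g (T x)‖} with hA
  have hAnonneg : ∀ r ∈ A, (0:ℝ) ≤ r := by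
    rintro r ⟨x, g, -, -, -, rfl⟩; exact norm_nonneg _
  have hene : ∀ n, e n ≠ 0 := by
    intro n h
    have := hbiorth n n
    rw [h] at this
    simp at this
  have hmem : ∀ n : ℕ, w n ∈ A := by
    intro n
    set x : X := ((‖e n‖:ℝ) : 𝕜)⁻¹ • e n with hx
    have hxnorm : ‖x‖ = 1 := by
      rw [hx, norm_smul, norm_inv, RCLike.norm_ofReal, abs_of_pos (norm_pos_iff.2 (hene n))]
      exact inv_mul_cancel₀ (norm_ne_zero_iff.2 (hene n))
    have hxne : x ≠ 0 := by rw [← norm_ne_zero_iff, hxnorm]; norm_num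
    obtain ⟨g, hg1, hg2⟩ := exists_dual_vector 𝕜 x (norm_ne_zero_iff.2 hxne)
    rw [hxnorm] at hg2
    have hgx : g x = 1 := by rw [hg2]; norm_num
    have hTx : T x = c n • x := by
      rw [hx, map_smul, hT, smul_comm]
    refine ⟨x, g, hxnorm, hg1, hgx, ?_⟩
    rw [hTx, map_smul, smul_eq_mul, hgx, mul_one, hcnorm]
  have hcraw : sInf A = 0 := by
    have hbdd : BddBelow A := ⟨0, fun r hr => hAnonneg r hr⟩
    refine le_antisymm ?_ (le_csInf ⟨w 0, hmem 0⟩ hAnonneg)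
    have h1 : ∀ n : ℕ, sInf A ≤ w n := fun n => csInf_le hbdd (hmem n)
    have h2 : Tendsto w atTop (nhds 0) := by
      have := tendsto_one_div_add_atTop_nhds_zero_nat (𝕜 := ℝ)
      simpa [hw, one_div] using this
    exact ge_of_tendsto h2 (Eventually.of_forall h1)
  -- non-attainment
  have hnotatt : ∀ (x₀ : X) (g : X →L[𝕜] 𝕜), ‖x₀‖ = 1 → ‖g‖ = 1 → g x₀ = 1 →
      g (T x₀) ≠ 0 := by
    intro x₀ g hx1 hg1 hgx hgT0
    set a : ℕ → 𝕜 := fun n => f n x₀ with ha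
    set b : ℕ → 𝕜 := fun n => g (e n) with hb
    have hgP : ∀ N, g (P N x₀) = ∑ n ∈ Finset.range N, a n * b n := by
      intro N
      rw [hPapply, map_sum]
      exact Finset.sum_congr rfl fun n _ => by rw [map_smul, smul_eq_mul]
    have hgTP : ∀ N, g (T (P N x₀)) = ∑ n ∈ Finset.range N, c n * (a n * b n) := by
      intro N
      rw [hPapply, map_sum, map_sum]
      refine Finset.sum_congr rfl fun n _ => ?_
      simp only [map_smul, hT, smul_eq_mul, ha, hb, hc]
      ring
    have hu : Tendsto (fun N => ∑ n ∈ Finset.range N, a n * b n) atTop (nhds 1) := by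
      have h1 : Tendsto (fun N => g (P N x₀)) atTop (nhds (g x₀)) :=
        (g.continuous.tendsto _).comp (hPx x₀)
      rw [hgx] at h1
      simpa only [hgP] using h1
    have hv : Tendsto (fun N => ∑ n ∈ Finset.range N, c n * (a n * b n)) atTop (nhds 0) := by
      have h1 : Tendsto (fun N => g (T (P N x₀))) atTop (nhds (g (T x₀))) :=
        (g.continuous.tendsto _).comp ((T.continuous.tendsto _).comp (hPx x₀))
      rw [hgT0] at h1
      simpa only [hgTP] using h1
    -- positivity of real parts via unconditionality
    have hre : ∀ k : ℕ, 0 ≤ RCLike.re (a k * b k) := by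
      intro k
      obtain ⟨S, hS1, hSe⟩ := huncond (fun n => if n = k then -1 else 1)
        (fun n => by by_cases h : n = k <;> simp [h])
      have hSP : ∀ N, k < N → S (P N x₀) = P N x₀ - (2:𝕜) • (a k • e k) := by
        intro N hk
        rw [hPapply, map_sum]
        have hterm : ∀ n ∈ Finset.range N, S (f n x₀ • e n)
            = a n • e n - (if n = k then (2:𝕜) • (a k • e k) else 0) := by
          intro n _
          rw [map_smul, hSe]
          by_cases h : n = k
          · subst h
            simp only [if_pos rfl]
            push_cast
            module
          · simp only [if_neg h]
            push_cast
            module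
        rw [Finset.sum_congr rfl hterm, Finset.sum_sub_distrib]
        rw [Finset.sum_ite_eq' (Finset.range N) k fun _ => (2:𝕜) • (a k • e k)]
        rw [if_pos (Finset.mem_range.2 hk)]
      have hSx : S x₀ = x₀ - (2:𝕜) • (a k • e k) := by
        have h1 : Tendsto (fun N => S (P N x₀)) atTop (nhds (S x₀)) :=
          (S.continuous.tendsto _).comp (hPx x₀)
        have h2 : Tendsto (fun N => S (P N x₀)) atTop
            (nhds (x₀ - (2:𝕜) • (a k • e k))) := by
          refine Tendsto.congr' ?_ ((hPx x₀).sub tendsto_const_nhds)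
          filter_upwards [eventually_gt_atTop k] with N hN
          exact (hSP N hN).symm
        exact tendsto_nhds_unique h1 h2
      have hgS : g (S x₀) = 1 - 2 * (a k * b k) := by
        rw [hSx, map_sub, hgx]
        simp only [map_smul, smul_eq_mul, ha, hb]
      have hle : RCLike.re (g (S x₀)) ≤ 1 := by
        refine (RCLike.re_le_norm _).trans ?_
        calc ‖g (S x₀)‖ ≤ ‖g‖ * ‖S x₀‖ := g.le_opNorm _
          _ ≤ 1 * (‖S‖ * ‖x₀‖) := by
              rw [hg1, one_mul, one_mul]; exact S.le_opNorm _
          _ ≤ 1 := by rw [hx1, mul_one, one_mul]; exact hS1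
      rw [hgS] at hle
      have : RCLike.re ((1:𝕜) - 2 * (a k * b k))
          = 1 - 2 * RCLike.re (a k * b k) := by
        rw [map_sub, RCLike.one_re]
        congr 1
        simp [RCLike.mul_re]
      rw [this] at hle
      linarith
    -- partial sums of weighted real parts
    set r : ℕ → ℝ := fun n => RCLike.re (a n * b n) with hr
    set sq : ℕ → ℝ := fun N => ∑ n ∈ Finset.range N, w n * r n with hsq
    have hreceq : ∀ n, RCLike.re (c n * (a n * b n)) = w n * r n := by
      intro n
      rw [hcw, ← RCLike.real_smul_eq_coe_mul, RCLike.smul_re, hr]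
    have hs0 : Tendsto sq atTop (nhds 0) := by
      have h1 := (RCLike.continuous_re.tendsto (0:𝕜)).comp hv
      rw [map_zero] at h1
      have : ∀ N, RCLike.re (∑ n ∈ Finset.range N, c n * (a n * b n)) = sq N := by
        intro N
        rw [map_sum, hsq]
        exact Finset.sum_congr rfl fun n _ => hreceq n
      simpa only [Function.comp_def, this] using h1
    have hsnonneg : ∀ N, 0 ≤ sq N :=
      fun N => Finset.sum_nonneg fun n _ => mul_nonneg (hwpos n).le (hre n)
    have hsmono : Monotone sq := by
      refine monotone_nat_of_le_succ fun N => ?_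
      rw [hsq]
      simp only [Finset.sum_range_succ]
      exact le_add_of_nonneg_right (mul_nonneg (hwpos N).le (hre N))
    have hszero : ∀ N, sq N = 0 :=
      fun N => le_antisymm (hsmono.ge_of_tendsto hs0 N) (hsnonneg N)
    have hrzero : ∀ n, r n = 0 := by
      intro n
      have h1 : sq (n+1) - sq n = w n * r n := by
        rw [hsq]; simp [Finset.sum_range_succ]
      rw [hszero, hszero, sub_zero] at h1
      have := h1.symm
      exact (mul_eq_zero.1 this).resolve_left (hwpos n).ne'
    -- contradiction with g x₀ = 1
    have hu' : Tendsto (fun N => RCLike.re (∑ n ∈ Finset.range N, a n * b n))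
        atTop (nhds 1) := by
      have h1 := (RCLike.continuous_re.tendsto (1:𝕜)).comp hu
      rw [RCLike.one_re] at h1
      exact h1
    have : ∀ N, RCLike.re (∑ n ∈ Finset.range N, a n * b n) = 0 := by
      intro N
      rw [map_sum]
      exact Finset.sum_eq_zero fun n _ => hrzero n
    have hzero' : Tendsto (fun N => RCLike.re (∑ n ∈ Finset.range N, a n * b n))
        atTop (nhds (0:ℝ)) := by
      simp only [this]
      exact tendsto_const_nhds
    have h01 : (0:ℝ) = 1 := tendsto_nhds_unique hzero' hu'
    norm_num at h01
  refine ⟨hTcomp, hinj, ?_, ?_⟩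
  · exact hcraw
  · rintro ⟨x₀, g, h1, h2, h3, h4⟩
    have h0 : ‖g (T x₀)‖ = 0 := by
      rw [← h4]; exact hcraw
    exact hnotatt x₀ g h1 h2 h3 (norm_eq_zero.1 h0)
end

section
/- For every bounded linear operator T on a Banach space X, the Crawford number of T equals the Crawford number of its adjoint: c(T) = c(T*). -/
open RCLike NormedSpace Filter Topology

section CrawfordAux

section Helpers
variable {𝕜 : Type*} [RCLike 𝕜]

lemma exists_unit_mul (z : 𝕜) : ∃ c : 𝕜, ‖c‖ = 1 ∧ c * z = (‖z‖ : 𝕜) := by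
  rcases eq_or_ne z 0 with rfl | hz
  · exact ⟨1, norm_one, by simp⟩
  · refine ⟨(‖z‖ : 𝕜) / z, ?_, div_mul_cancel₀ _ hz⟩
    rw [norm_div, norm_ofReal, abs_of_nonneg (norm_nonneg z), div_self (norm_ne_zero_iff.2 hz)]

variable {X : Type*} [NormedAddCommGroup X] [NormedSpace 𝕜 X]

lemma opNorm_le_of_re_ball (g : X →L[𝕜] 𝕜) (u : ℝ)
    (h : ∀ x : X, ‖x‖ ≤ 1 → re (g x) ≤ u) : ‖g‖ ≤ u := by
  have hu : 0 ≤ u := by simpa using h 0 (by simp)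
  apply ContinuousLinearMap.opNorm_le_bound _ hu
  intro x
  rcases eq_or_ne x 0 with rfl | hx
  · simp
  obtain ⟨c, hc1, hcz⟩ := exists_unit_mul (g x)
  have hxn : (0:ℝ) < ‖x‖ := norm_pos_iff.2 hx
  have hw : ‖(((‖x‖ : ℝ) : 𝕜)⁻¹ • (c • x))‖ ≤ 1 := by
    rw [norm_smul, norm_smul, norm_inv, norm_ofReal, abs_of_nonneg (norm_nonneg x), hc1, one_mul]
    rw [inv_mul_cancel₀ hxn.ne']
  have hval : g ((((‖x‖ : ℝ)) : 𝕜)⁻¹ • (c • x)) = ((‖x‖⁻¹ * ‖g x‖ : ℝ) : 𝕜) := by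
    rw [map_smul, map_smul, smul_eq_mul, smul_eq_mul, hcz, ← ofReal_inv, ← ofReal_mul]
  have hle := h _ hw
  rw [hval, ofReal_re] at hle
  calc ‖g x‖ = ‖x‖ * (‖x‖⁻¹ * ‖g x‖) := by field_simp
    _ ≤ ‖x‖ * u := mul_le_mul_of_nonneg_left hle hxn.le
    _ = u * ‖x‖ := mul_comm _ _

lemma re_clm_rep (φ : 𝕜 →L[ℝ] ℝ) (z : 𝕜) :
    φ z = re ((↑(φ 1) - ↑(φ (I : 𝕜)) * I) * z) := by
  have hz : z = (re z : ℝ) • (1 : 𝕜) + (im z : ℝ) • (I : 𝕜) := by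
    simp [RCLike.real_smul_eq_coe_mul, re_add_im]
  conv_lhs => rw [hz]
  rw [map_add, map_smul, map_smul]
  simp only [smul_eq_mul]
  rw [sub_mul, map_sub, mul_assoc, ← real_smul_eq_coe_mul, ← real_smul_eq_coe_mul,
    smul_re, smul_re, I_mul_re]
  ring
end Helpers

section Ekeland
variable {X : Type*} [NormedAddCommGroup X] [CompleteSpace X]
lemma exists_min_point (S : Set X) (hS : IsClosed S) (φ : X → ℝ) (hφ : Continuous φ)
    (hφ0 : ∀ z ∈ S, 0 ≤ φ z) (x₀ : X) (hx₀ : x₀ ∈ S) {lam : ℝ} (hlam : 0 < lam) :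
    ∃ y ∈ S, lam * dist y x₀ ≤ φ x₀ - φ y ∧
      ∀ z ∈ S, lam * dist z y ≤ φ y - φ z → z = y := by
  set M := {z : X // z ∈ S ∧ lam * dist z x₀ ≤ φ x₀ - φ z} with hM
  have hx₀M : x₀ ∈ S ∧ lam * dist x₀ x₀ ≤ φ x₀ - φ x₀ := ⟨hx₀, by simp⟩
  set r : M → M → Prop := fun a b => lam * dist (b : X) (a : X) ≤ φ a - φ b with hr
  have htrans : ∀ {a b c : M}, r a b → r b c → r a c := by
    intro a b c hab hbc
    have := dist_triangle (c : X) (b : X) (a : X)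
    simp only [hr] at *
    nlinarith
  have hchain : ∀ c : Set M, IsChain r c → ∃ ub, ∀ a ∈ c, r a ub := by
    intro c hc
    rcases c.eq_empty_or_nonempty with rfl | hne
    · exact ⟨⟨x₀, hx₀M⟩, by simp⟩
    set A := (fun a : M => φ (a : X)) '' c with hA
    have hAne : A.Nonempty := hne.image _
    have hAbdd : BddBelow A := by
      refine ⟨0, ?_⟩
      rintro t ⟨a, _, rfl⟩
      exact hφ0 _ a.2.1
    set m := sInf A with hm
    have hseq : ∀ n : ℕ, ∃ a : M, a ∈ c ∧ φ (a : X) < m + 1 / (n + 1) := by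
      intro n
      have h1 : m < m + 1 / (n + 1 : ℝ) := lt_add_of_pos_right m (by positivity)
      obtain ⟨t, ht, htlt⟩ := exists_lt_of_csInf_lt hAne h1
      obtain ⟨a, hac, rfl⟩ := ht
      exact ⟨a, hac, htlt⟩
    choose a hac haφ using hseq
    have hmle : ∀ b : M, b ∈ c → m ≤ φ (b : X) := fun b hb => csInf_le hAbdd ⟨b, hb, rfl⟩
    have hkey : ∀ b : M, b ∈ c → ∀ n : ℕ,
        lam * dist ((a n : M) : X) (b : X) ≤ (φ (b : X) - m) + 1 / (n + 1) := by
      intro b hb n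
      have hbm := hmle b hb
      have han := haφ n
      have hanm := hmle _ (hac n)
      have hpos : (0:ℝ) < 1 / (n + 1 : ℝ) := by positivity
      rcases eq_or_ne (a n) b with heq | hne'
      · rw [heq]
        simp only [dist_self, mul_zero]
        linarith
      · rcases hc (hac n) hb hne' with h | h
        · simp only [hr] at h
          rw [dist_comm]
          linarith
        · simp only [hr] at h
          linarith
    have hcauchy : CauchySeq (fun n => ((a n : M) : X)) := by
      rw [Metric.cauchySeq_iff']
      intro ε hε
      obtain ⟨N, hN⟩ := exists_nat_gt (2 / (lam * ε))
      refine ⟨N, fun n hn => ?_⟩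
      have h1 := hkey _ (hac N) n
      have h2 : φ ((a N : M) : X) - m < 1 / (N + 1) := by
        have := haφ N; linarith
      have h3 : 1 / (n + 1 : ℝ) ≤ 1 / (N + 1 : ℝ) := by
        apply one_div_le_one_div_of_le (by positivity)
        exact_mod_cast by omega
      have h4 : lam * dist ((a n : M) : X) ((a N : M) : X) < 2 / (N + 1) := by
        have he : (2:ℝ) / (N + 1) = 1 / (N + 1) + 1 / (N + 1) := by ring
        rw [he]; linarith
      have h5 : (2 : ℝ) / (N + 1) < lam * ε := by
        rw [div_lt_iff₀ (by positivity)]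
        have hN' : 2 / (lam * ε) < (N : ℝ) + 1 := by
          have : (N : ℝ) ≤ (N : ℝ) + 1 := by linarith
          linarith
        calc (2:ℝ) = (2 / (lam * ε)) * (lam * ε) := by field_simp
          _ < ((N:ℝ) + 1) * (lam * ε) := by
              apply mul_lt_mul_of_pos_right hN' (by positivity)
          _ = lam * ε * ((N:ℝ) + 1) := by ring
      have := h4.trans h5
      exact lt_of_mul_lt_mul_left (by linarith [this]) hlam.le
    obtain ⟨u, hu⟩ := cauchySeq_tendsto_of_complete hcauchy
    have huS : u ∈ S := hS.mem_of_tendsto hu (Eventually.of_forall fun n => (a n).2.1)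
    have hφu : Tendsto (fun n => φ ((a n : M) : X)) atTop (𝓝 (φ u)) := (hφ.tendsto u).comp hu
    have hlim1 : Tendsto (fun n : ℕ => m + 1 / ((n : ℝ) + 1)) atTop (𝓝 m) := by
      have := tendsto_one_div_add_atTop_nhds_zero_nat (𝕜 := ℝ)
      simpa using tendsto_const_nhds.add this
    have hφum : φ u = m := by
      refine le_antisymm ?_ ?_
      · exact le_of_tendsto_of_tendsto hφu hlim1 (Eventually.of_forall fun n => (haφ n).le)
      · exact ge_of_tendsto hφu (Eventually.of_forall fun n => hmle _ (hac n))
    have huM : u ∈ S ∧ lam * dist u x₀ ≤ φ x₀ - φ u := by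
      refine ⟨huS, ?_⟩
      have hd : Tendsto (fun n => lam * dist ((a n : M) : X) x₀) atTop (𝓝 (lam * dist u x₀)) :=
        tendsto_const_nhds.mul (hu.dist tendsto_const_nhds)
      exact le_of_tendsto_of_tendsto hd (tendsto_const_nhds.sub hφu)
        (Eventually.of_forall fun n => (a n).2.2)
    refine ⟨⟨u, huM⟩, ?_⟩
    intro b hb
    show lam * dist u (b : X) ≤ φ (b : X) - φ u
    have hd : Tendsto (fun n => lam * dist ((a n : M) : X) (b : X)) atTop
        (𝓝 (lam * dist u (b : X))) :=
      tendsto_const_nhds.mul (hu.dist tendsto_const_nhds)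
    have hlim2 : Tendsto (fun n : ℕ => (φ (b : X) - m) + 1 / ((n : ℝ) + 1)) atTop
        (𝓝 (φ (b : X) - m)) := by
      simpa using (tendsto_const_nhds (x := φ (b : X) - m) (f := atTop)).add
        tendsto_one_div_add_atTop_nhds_zero_nat
    rw [hφum]
    exact le_of_tendsto_of_tendsto hd hlim2 (Eventually.of_forall (hkey b hb))
  obtain ⟨mm, hmm⟩ := exists_maximal_of_chains_bounded hchain (fun {a b c} => htrans)
  refine ⟨(mm : X), mm.2.1, mm.2.2, ?_⟩
  intro z hz hzle
  have hzM : z ∈ S ∧ lam * dist z x₀ ≤ φ x₀ - φ z := by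
    refine ⟨hz, ?_⟩
    have h1 := mm.2.2
    have := dist_triangle z (mm : X) x₀
    nlinarith
  have := hmm ⟨z, hzM⟩ hzle
  simp only [hr] at this hzle
  have hd0 : dist z (mm : X) = 0 := by
    rw [dist_comm (mm : X) z] at this
    nlinarith [dist_nonneg (x := z) (y := (mm : X))]
  exact dist_eq_zero.1 hd0
end Ekeland

section GBPB
variable {𝕜 : Type*} [RCLike 𝕜] {X : Type*} [NormedAddCommGroup X] [NormedSpace 𝕜 X]

lemma goldstine_two [NormedSpace ℝ X] [IsScalarTower ℝ 𝕜 X]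
    (F : StrongDual 𝕜 (StrongDual 𝕜 X)) (hF : ‖F‖ ≤ 1) (g₁ g₂ : StrongDual 𝕜 X) {δ : ℝ} (hδ : 0 < δ) :
    ∃ x : X, ‖x‖ ≤ 1 ∧ ‖g₁ x - F g₁‖ < δ ∧ ‖g₂ x - F g₂‖ < δ := by
  set Φ : X →L[𝕜] 𝕜 × 𝕜 := g₁.prod g₂ with hΦ
  set K := closure (Φ '' Metric.closedBall (0:X) 1) with hK
  have hKconv : Convex ℝ K :=
    ((convex_closedBall (0:X) 1).linear_image (Φ.restrictScalars ℝ).toLinearMap).closure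
  have hmem : (F g₁, F g₂) ∈ K := by
    by_contra hnot
    obtain ⟨f, u, hfK, hfc⟩ :=
      geometric_hahn_banach_closed_point hKconv isClosed_closure hnot
    set b₁ : 𝕜 := ↑(f (1, 0)) - ↑(f ((I : 𝕜), 0)) * I with hb₁
    set b₂ : 𝕜 := ↑(f (0, 1)) - ↑(f (0, (I : 𝕜))) * I with hb₂
    have hrep : ∀ z : 𝕜 × 𝕜, f z = re (b₁ * z.1 + b₂ * z.2) := by
      intro z
      have hdecomp : f z = f.comp (ContinuousLinearMap.inl ℝ 𝕜 𝕜) z.1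
          + f.comp (ContinuousLinearMap.inr ℝ 𝕜 𝕜) z.2 := by
        simp only [ContinuousLinearMap.comp_apply, ContinuousLinearMap.inl_apply,
          ContinuousLinearMap.inr_apply, ← map_add, Prod.mk_add_mk, add_zero, zero_add]
      rw [hdecomp, re_clm_rep (f.comp (ContinuousLinearMap.inl ℝ 𝕜 𝕜)) z.1,
        re_clm_rep (f.comp (ContinuousLinearMap.inr ℝ 𝕜 𝕜)) z.2, ← map_add]
      simp [hb₁, hb₂]
    set h₀ : StrongDual 𝕜 X := b₁ • g₁ + b₂ • g₂ with hh₀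
    have key : ∀ x : X, f (Φ x) = re (h₀ x) := by
      intro x
      rw [hrep]
      simp [hh₀, hΦ]
    have h5 : ‖h₀‖ ≤ u := by
      apply opNorm_le_of_re_ball
      intro x hx
      rw [← key]
      exact (hfK _ (subset_closure ⟨x, by simpa using hx, rfl⟩)).le
    have h6 : u < re (F h₀) := by
      have : f (F g₁, F g₂) = re (F h₀) := by
        rw [hrep]
        simp [hh₀, map_add, map_smul, smul_eq_mul]
      linarith [hfc, this ▸ hfc]
    have h7 : re (F h₀) ≤ u := by
      calc re (F h₀) ≤ |re (F h₀)| := le_abs_self _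
        _ ≤ ‖F h₀‖ := abs_re_le_norm _
        _ ≤ ‖F‖ * ‖h₀‖ := F.le_opNorm _
        _ ≤ 1 * u := by
            apply mul_le_mul hF h5 (norm_nonneg _) zero_le_one
        _ = u := one_mul u
    linarith
  rw [Metric.mem_closure_iff] at hmem
  obtain ⟨p, hp, hdist⟩ := hmem δ hδ
  obtain ⟨x, hx, rfl⟩ := hp
  rw [Prod.dist_eq] at hdist
  simp only [hΦ, ContinuousLinearMap.prod_apply] at hdist
  obtain ⟨h1, h2⟩ := max_lt_iff.1 hdist
  rw [dist_comm, dist_eq_norm] at h1 h2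
  exact ⟨x, by simpa using hx, h1, h2⟩

lemma eq_ofReal_of_re_eq {z : 𝕜} {r : ℝ} (h1 : ‖z‖ ≤ r) (h2 : re z = r) : z = (r : 𝕜) := by
  have hnz : ‖z‖ = r := le_antisymm h1 (h2 ▸ (re_le_norm z))
  have hsq : ‖z‖ ^ 2 = re z ^ 2 + im z ^ 2 := by
    rw [RCLike.norm_sq_eq_def]; ring
  have h6 : ‖z‖ ^ 2 = r ^ 2 := by rw [hnz]
  have h7 : re z ^ 2 = r ^ 2 := by rw [h2]
  have h5 : im z ^ 2 ≤ 0 := by linarith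
  have him : im z = 0 := sq_eq_zero_iff.1 (le_antisymm h5 (sq_nonneg _))
  apply RCLike.ext <;> simp [him, h2]

variable [NormedSpace ℝ X] [IsScalarTower ℝ 𝕜 X] [CompleteSpace X]

set_option maxHeartbeats 1000000 in
lemma bishop_phelps_bollobas (x : X) (f : X →L[𝕜] 𝕜) (hx : ‖x‖ ≤ 1) (hf : ‖f‖ = 1)
    {ε : ℝ} (hε : 0 < ε) (hε2 : ε ≤ 1/2) (h : 1 - ε^2 ≤ re (f x)) :
    ∃ (y : X) (g : X →L[𝕜] 𝕜), ‖y‖ = 1 ∧ ‖g‖ = 1 ∧ g y = 1 ∧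
      ‖y - x‖ ≤ ε ∧ ‖g - f‖ ≤ ε^2 + 2*ε := by
  have hre_le : ∀ z : X, ‖z‖ ≤ 1 → re (f z) ≤ 1 := by
    intro z hz
    calc re (f z) ≤ |re (f z)| := le_abs_self _
      _ ≤ ‖f z‖ := abs_re_le_norm _
      _ ≤ ‖f‖ * ‖z‖ := f.le_opNorm z
      _ ≤ 1 := by rw [hf, one_mul]; exact hz
  set φ : X → ℝ := fun z => 1 - re (f z) with hφdef
  have hφc : Continuous φ := continuous_const.sub (reCLM.continuous.comp f.continuous)
  have hφ0 : ∀ z ∈ Metric.closedBall (0:X) 1, 0 ≤ φ z := by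
    intro z hz
    simp only [Metric.mem_closedBall, dist_zero_right] at hz
    have := hre_le z hz
    simp only [hφdef]
    linarith
  obtain ⟨y, hyS, hyx, hymin⟩ := exists_min_point (Metric.closedBall (0:X) 1)
    Metric.isClosed_closedBall φ hφc hφ0 x (by simpa using hx) hε
  have hynorm : ‖y‖ ≤ 1 := by simpa using hyS
  have hφx : φ x ≤ ε^2 := by simp only [hφdef]; linarith
  have hφy : φ y ≤ ε^2 := by
    have h0 := mul_nonneg hε.le dist_nonneg (a := ε) (b := dist y x)
    linarith
  have hfy : 1 - ε^2 ≤ re (f y) := by simp only [hφdef] at hφy; linarith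
  have hdyx : ‖y - x‖ ≤ ε := by
    have h1 : ε * dist y x ≤ ε^2 := by
      have := hφ0 y hyS
      linarith
    rw [← dist_eq_norm]
    nlinarith
  -- Ekeland inequality
  have hek : ∀ z : X, ‖z‖ ≤ 1 → re (f z) ≤ re (f y) + ε * ‖z - y‖ := by
    intro z hz
    by_contra hcon
    push_neg at hcon
    have hzy : z = y := by
      apply hymin z (by simpa using hz)
      rw [dist_eq_norm]
      simp only [hφdef]
      linarith
    rw [hzy] at hcon
    simp at hcon
  -- separation
  set E : Set (X × ℝ) := {p : X × ℝ | p.1 ∈ Set.univ ∧ ε • dist p.1 y + re (f y) < p.2}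
    with hEdef
  set A : Set (X × ℝ) := {p : X × ℝ | ‖p.1‖ ≤ 1 ∧ p.2 ≤ re (f p.1)} with hAdef
  have hEconv : Convex ℝ E := by
    have h1 : ConvexOn ℝ Set.univ (fun z : X => ε • dist z y + re (f y)) :=
      ((convexOn_univ_dist y).smul hε.le).add_const (re (f y))
    exact h1.convex_strict_epigraph
  have hEopen : IsOpen E := by
    have : E = {p : X × ℝ | ε * dist p.1 y + re (f y) < p.2} := by
      ext p; simp [hEdef, smul_eq_mul]
    rw [this]
    exact isOpen_lt (by fun_prop) continuous_snd
  have hAconv : Convex ℝ A := by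
    rintro p ⟨hp1, hp2⟩ q ⟨hq1, hq2⟩ a b ha hb hab
    constructor
    · show ‖(a • p + b • q).1‖ ≤ 1
      simp only [Prod.fst_add, Prod.smul_fst]
      calc ‖a • p.1 + b • q.1‖ ≤ ‖a • p.1‖ + ‖b • q.1‖ := norm_add_le _ _
        _ = a * ‖p.1‖ + b * ‖q.1‖ := by
            rw [norm_smul, norm_smul, Real.norm_eq_abs, Real.norm_eq_abs,
              abs_of_nonneg ha, abs_of_nonneg hb]
        _ ≤ a * 1 + b * 1 := by
            gcongr
        _ = 1 := by linarith
    · have hlin : re (f (a • p.1 + b • q.1)) = a * re (f p.1) + b * re (f q.1) := by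
        rw [map_add, f.map_smul_of_tower, f.map_smul_of_tower, map_add, smul_re, smul_re]
      show (a • p + b • q).2 ≤ re (f (a • p + b • q).1)
      simp only [Prod.fst_add, Prod.snd_add, Prod.smul_fst, Prod.smul_snd, smul_eq_mul, hlin]
      have := mul_le_mul_of_nonneg_left hp2 ha
      have := mul_le_mul_of_nonneg_left hq2 hb
      linarith
  have hdisj : Disjoint E A := by
    rw [Set.disjoint_left]
    rintro p ⟨-, hp2⟩ ⟨hq1, hq2⟩
    have := hek p.1 hq1
    rw [← dist_eq_norm] at this
    simp only [smul_eq_mul] at hp2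
    linarith
  obtain ⟨ψ, u, hψE, hψA⟩ := _root_.geometric_hahn_banach_open hEconv hEopen hAconv hdisj
  set G₀ : X →L[ℝ] ℝ := ψ.comp (ContinuousLinearMap.inl ℝ X ℝ) with hG₀
  set cc : ℝ := ψ (0, 1) with hcc
  have hsplit : ∀ p : X × ℝ, ψ p = G₀ p.1 + p.2 * cc := by
    intro p
    have h1 : p = ((p.1, 0) : X × ℝ) + (0, p.2) := by simp
    have h2 : ((0, p.2) : X × ℝ) = p.2 • ((0 : X), (1:ℝ)) := by simp
    rw [h1, map_add, h2, map_smul]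
    simp [hG₀, smul_eq_mul, hcc]
  -- facts
  have hA1 : ∀ z : X, ‖z‖ ≤ 1 → u ≤ G₀ z + re (f z) * cc := by
    intro z hz
    have := hψA (z, re (f z)) ⟨hz, le_rfl⟩
    rwa [hsplit] at this
  have hE1 : ∀ z : X, G₀ z + (ε * ‖z - y‖ + re (f y)) * cc ≤ u := by
    intro z
    have hev : ∀ η : ℝ, 0 < η → G₀ z + (ε * ‖z - y‖ + re (f y) + η) * cc < u := by
      intro η hη
      have hmem : ((z, ε * ‖z - y‖ + re (f y) + η) : X × ℝ) ∈ E := by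
        refine ⟨Set.mem_univ _, ?_⟩
        simp only [smul_eq_mul, dist_eq_norm]
        linarith
      have := hψE _ hmem
      rwa [hsplit] at this
    have hcont : Tendsto (fun η : ℝ => G₀ z + (ε * ‖z - y‖ + re (f y) + η) * cc) (𝓝[>] 0)
        (𝓝 (G₀ z + (ε * ‖z - y‖ + re (f y)) * cc)) := by
      have hco : Continuous (fun η : ℝ => G₀ z + (ε * ‖z - y‖ + re (f y) + η) * cc) := by fun_prop
      have h0 := (hco.tendsto 0).mono_left (nhdsWithin_le_nhds (s := Set.Ioi (0:ℝ)))
      simpa using h0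
    exact le_of_tendsto hcont (eventually_nhdsWithin_of_forall fun η hη => (hev η hη).le)
  have hccneg : cc < 0 := by
    have h1 := hA1 y hynorm
    have h2 : G₀ y + (ε * ‖y - y‖ + re (f y) + 1) * cc < u := by
      have hmem : ((y, ε * ‖y - y‖ + re (f y) + 1) : X × ℝ) ∈ E := by
        refine ⟨Set.mem_univ _, ?_⟩
        simp [smul_eq_mul, dist_eq_norm]
      have := hψE _ hmem
      rwa [hsplit] at this
    simp only [sub_self, norm_zero, mul_zero, zero_add] at h2
    linarith
  have hueq : G₀ y + re (f y) * cc = u := by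
    have h1 := hA1 y hynorm
    have h2 := hE1 y
    simp only [sub_self, norm_zero, mul_zero, zero_add] at h2
    linarith
  -- the functional F
  set F : X →L[ℝ] ℝ := reCLM.comp (f.restrictScalars ℝ) + cc⁻¹ • G₀ with hFdef
  have hFval : ∀ z : X, F z = re (f z) + cc⁻¹ * G₀ z := by
    intro z; simp [hFdef, smul_eq_mul]
  have hGbound : ∀ w : X, |cc⁻¹ * G₀ w| ≤ ε * ‖w‖ := by
    have key : ∀ w : X, -(ε * ‖w‖) ≤ cc⁻¹ * G₀ w := by
      intro w
      have h1 := hE1 (y + w)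
      rw [hueq.symm] at h1
      simp only [add_sub_cancel_left] at h1
      rw [map_add] at h1
      have h2 : G₀ w ≤ -cc * (ε * ‖w‖) := by nlinarith
      have h3 : cc⁻¹ * (-cc * (ε * ‖w‖)) ≤ cc⁻¹ * G₀ w :=
        mul_le_mul_of_nonpos_left h2 (inv_nonpos.2 hccneg.le)
      have h4 : cc⁻¹ * (-cc * (ε * ‖w‖)) = -(ε * ‖w‖) := by
        rw [neg_mul, mul_neg, inv_mul_cancel_left₀ hccneg.ne]
      linarith
    intro w
    rw [abs_le]
    refine ⟨key w, ?_⟩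
    have := key (-w)
    rw [map_neg, norm_neg] at this
    linarith [this]
  have hexpand : ∀ t s : ℝ, cc⁻¹ * (t + s * cc) = cc⁻¹ * t + s := by
    intro t s
    rw [mul_add, mul_comm s cc, inv_mul_cancel_left₀ hccneg.ne]
  have hFmax : ∀ z : X, ‖z‖ ≤ 1 → F z ≤ F y := by
    intro z hz
    have h1 := hA1 z hz
    rw [← hueq] at h1
    have h3 : cc⁻¹ * (G₀ z + re (f z) * cc) ≤ cc⁻¹ * (G₀ y + re (f y) * cc) :=
      mul_le_mul_of_nonpos_left h1 (inv_nonpos.2 hccneg.le)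
    rw [hexpand, hexpand] at h3
    rw [hFval, hFval]
    linarith
  have hFy_lb : 1 - ε^2 - ε ≤ F y := by
    have h1 := (abs_le.1 (hGbound y)).1
    have hb : ε * ‖y‖ ≤ ε * 1 := mul_le_mul_of_nonneg_left hynorm hε.le
    rw [hFval]
    linarith
  have hFpos : 0 < F y := by
    have ht := hFy_lb
    have h8 : ε^2 ≤ (1/2:ℝ)^2 := by nlinarith
    norm_num at h8
    linarith
  have hFble : ∀ z : X, ‖z‖ ≤ 1 → |F z| ≤ F y := by
    intro z hz
    rw [abs_le]
    refine ⟨?_, hFmax z hz⟩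
    have h1 := hFmax (-z) (by rwa [norm_neg])
    rw [map_neg] at h1
    linarith
  have hFnorm : ‖F‖ = F y := by
    apply le_antisymm
    · apply ContinuousLinearMap.opNorm_le_bound _ hFpos.le
      intro z
      rcases eq_or_ne z 0 with rfl | hz0
      · simp
      · have hzn : (0:ℝ) < ‖z‖ := norm_pos_iff.2 hz0
        have h1 : ‖(‖z‖⁻¹ • z : X)‖ ≤ 1 := by
          rw [norm_smul, norm_inv, Real.norm_eq_abs, abs_of_nonneg (norm_nonneg z),
            inv_mul_cancel₀ hzn.ne']
        have h2 := hFble _ h1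
        rw [map_smul, smul_eq_mul, abs_mul, abs_inv, abs_of_nonneg (norm_nonneg z)] at h2
        rw [Real.norm_eq_abs]
        calc |F z| = ‖z‖ * (‖z‖⁻¹ * |F z|) := by field_simp
          _ ≤ ‖z‖ * F y := mul_le_mul_of_nonneg_left h2 hzn.le
          _ = F y * ‖z‖ := mul_comm _ _
    · calc F y ≤ |F y| := le_abs_self _
        _ = ‖F y‖ := (Real.norm_eq_abs _).symm
        _ ≤ ‖F‖ * ‖y‖ := F.le_opNorm y
        _ ≤ ‖F‖ * 1 := mul_le_mul_of_nonneg_left hynorm (norm_nonneg F)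
        _ = ‖F‖ := mul_one _
  have hy1 : ‖y‖ = 1 := by
    by_contra hne
    have hlt : ‖y‖ < 1 := lt_of_le_of_ne hynorm hne
    have h1 : F y ≤ ‖F‖ * ‖y‖ := by
      calc F y ≤ |F y| := le_abs_self _
        _ = ‖F y‖ := (Real.norm_eq_abs _).symm
        _ ≤ ‖F‖ * ‖y‖ := F.le_opNorm y
    rw [hFnorm] at h1
    nlinarith
  set h𝕜 : X →L[𝕜] 𝕜 := StrongDual.extendRCLike F with hh
  have hre : ∀ z : X, re (h𝕜 z) = F z := by
    intro z
    rw [hh, ContinuousLinearMap.extendTo𝕜'_apply]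
    simp [mul_re, I_re, ofReal_re, ofReal_im]
  have hnormh : ‖h𝕜‖ = F y := by rw [hh, ContinuousLinearMap.norm_extendTo𝕜', hFnorm]
  have hhy : h𝕜 y = ((F y : ℝ) : 𝕜) := by
    apply eq_ofReal_of_re_eq
    · calc ‖h𝕜 y‖ ≤ ‖h𝕜‖ * ‖y‖ := h𝕜.le_opNorm y
        _ = F y := by rw [hnormh, hy1, mul_one]
    · exact hre y
  clear_value h𝕜
  clear_value F
  set g : X →L[𝕜] 𝕜 := (((F y : ℝ) : 𝕜))⁻¹ • h𝕜 with hg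
  have hgy : g y = 1 := by
    rw [hg]
    simp only [ContinuousLinearMap.smul_apply, hhy, smul_eq_mul]
    rw [inv_mul_cancel₀ (by exact_mod_cast ofReal_ne_zero.2 hFpos.ne')]
  have hgnorm : ‖g‖ = 1 := by
    have h1 : ‖g‖ = ‖(((F y : ℝ) : 𝕜))⁻¹‖ * ‖h𝕜‖ := by rw [hg]; exact norm_smul (α := 𝕜) (β := X →L[𝕜] 𝕜) _ _
    rw [h1, hnormh, norm_inv, norm_ofReal, abs_of_pos hFpos, inv_mul_cancel₀ hFpos.ne']
  have hhf : ‖h𝕜 - f‖ ≤ ε := by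
    apply ContinuousLinearMap.opNorm_le_bound _ hε.le
    intro z
    obtain ⟨c, hc1, hcz⟩ := exists_unit_mul ((h𝕜 - f) z)
    have h1 : (‖(h𝕜 - f) z‖ : ℝ) = re ((h𝕜 - f) (c • z)) := by
      rw [map_smul, smul_eq_mul, hcz, ofReal_re]
    have h2 : re ((h𝕜 - f) (c • z)) = cc⁻¹ * G₀ (c • z) := by
      simp only [ContinuousLinearMap.sub_apply, map_sub]
      rw [hre, hFval]
      ring
    have h4 : ‖(c • z : X)‖ = ‖z‖ := by rw [norm_smul, hc1, one_mul]
    calc ‖(h𝕜 - f) z‖ = cc⁻¹ * G₀ (c • z) := by rw [h1, h2]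
      _ ≤ |cc⁻¹ * G₀ (c • z)| := le_abs_self _
      _ ≤ ε * ‖(c • z : X)‖ := hGbound _
      _ = ε * ‖z‖ := by rw [h4]
  have hFyub : F y ≤ 1 + ε := by
    have h1 := (abs_le.1 (hGbound y)).2
    have h2 := hre_le y hynorm
    have hb : ε * ‖y‖ ≤ ε * 1 := mul_le_mul_of_nonneg_left hynorm hε.le
    rw [hFval]
    linarith
  have hgh : ‖g - h𝕜‖ ≤ ε^2 + ε := by
    have hrw : g - h𝕜 = ((((F y : ℝ) : 𝕜))⁻¹ - 1) • h𝕜 := by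
      ext z
      simp only [hg, ContinuousLinearMap.sub_apply, ContinuousLinearMap.smul_apply,
        smul_eq_mul, sub_mul, one_mul]
    have h1 : ‖g - h𝕜‖ = ‖(((F y : ℝ) : 𝕜))⁻¹ - 1‖ * ‖h𝕜‖ := by rw [hrw]; exact norm_smul (α := 𝕜) (β := X →L[𝕜] 𝕜) _ _
    have hcast : ((((F y : ℝ) : 𝕜))⁻¹ - 1) = (((F y)⁻¹ - 1 : ℝ) : 𝕜) := by push_cast; ring
    rw [h1, hnormh, hcast, norm_ofReal]
    have habs : |(F y)⁻¹ - 1| * F y = |1 - F y| := by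
      have h2 : |(F y)⁻¹ - 1| * |F y| = |((F y)⁻¹ - 1) * F y| := (abs_mul _ _).symm
      rw [abs_of_pos hFpos] at h2
      rw [h2, sub_mul, inv_mul_cancel₀ hFpos.ne', one_mul]
    rw [habs, abs_le]
    constructor <;> linarith [sq_nonneg ε]
  refine ⟨y, g, hy1, hgnorm, hgy, hdyx, ?_⟩
  calc ‖g - f‖ ≤ ‖g - h𝕜‖ + ‖h𝕜 - f‖ := by
        have hrw : g - f = (g - h𝕜) + (h𝕜 - f) := by abel
        rw [hrw]
        exact norm_add_le _ _
    _ ≤ (ε^2 + ε) + ε := add_le_add hgh hhf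
    _ = ε^2 + 2*ε := by ring


end GBPB
end CrawfordAux

noncomputable def opAdjoint {𝕜 : Type*} [RCLike 𝕜] {X : Type*} [NormedAddCommGroup X]
    [NormedSpace 𝕜 X] (T : X →L[𝕜] X) :
    StrongDual 𝕜 X →L[𝕜] StrongDual 𝕜 X :=
  (ContinuousLinearMap.compL 𝕜 X X 𝕜).flip T

set_option maxHeartbeats 1000000 in
theorem crawford_adjoint_eq
    {𝕜 : Type*} [RCLike 𝕜] {X : Type*} [NormedAddCommGroup X] [NormedSpace 𝕜 X]
    [CompleteSpace X] (T : X →L[𝕜] X) :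
    crawford T = crawford (opAdjoint T) := by
  classical
  have hadj : ∀ (f : StrongDual 𝕜 X) (z : X), (opAdjoint T f) z = f (T z) := fun f z => rfl
  set S : Set ℝ :=
    {r : ℝ | ∃ (x : X) (f : X →L[𝕜] 𝕜), ‖x‖ = 1 ∧ ‖f‖ = 1 ∧ f x = 1 ∧ r = ‖f (T x)‖} with hSdef
  set S' : Set ℝ := {r : ℝ | ∃ (x : StrongDual 𝕜 X) (f : StrongDual 𝕜 X →L[𝕜] 𝕜),
      ‖x‖ = 1 ∧ ‖f‖ = 1 ∧ f x = 1 ∧ r = ‖f (opAdjoint T x)‖} with hS'def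
  have hgoal : crawford T = sInf S := rfl
  have hgoal' : crawford (opAdjoint T) = sInf S' := rfl
  rw [hgoal, hgoal']
  have hsub : S ⊆ S' := by
    rintro r ⟨x, f, hx, hf, hfx, rfl⟩
    refine ⟨f, inclusionInDoubleDual 𝕜 X x, hf, ?_, ?_, ?_⟩
    · rw [show inclusionInDoubleDual 𝕜 X x = inclusionInDoubleDualLi 𝕜 x from rfl,
        (inclusionInDoubleDualLi 𝕜 (E := X)).norm_map, hx]
    · rw [dual_def, hfx]
    · rw [dual_def, hadj]
  by_cases hX : ∃ x₀ : X, x₀ ≠ 0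
  · obtain ⟨x₀, hx₀⟩ := hX
    letI : Module ℝ X := RestrictScalars.module ℝ 𝕜 X
    letI : IsScalarTower ℝ 𝕜 X := RestrictScalars.isScalarTower ℝ 𝕜 X
    letI : NormedSpace ℝ X := NormedSpace.restrictScalars ℝ 𝕜 X
    have hSne : S.Nonempty := by
      set x₁ : X := (((‖x₀‖ : ℝ) : 𝕜))⁻¹ • x₀ with hx₁
      have hx₀n : (0:ℝ) < ‖x₀‖ := norm_pos_iff.2 hx₀
      have hx₁n : ‖x₁‖ = 1 := by
        rw [hx₁, norm_smul, norm_inv, norm_ofReal, abs_of_pos hx₀n, inv_mul_cancel₀ hx₀n.ne']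
      have hx₁0 : x₁ ≠ 0 := by
        intro h0
        rw [h0, norm_zero] at hx₁n
        norm_num at hx₁n
      obtain ⟨f, hf1, hfx⟩ := exists_dual_vector 𝕜 x₁ (norm_ne_zero_iff.2 hx₁0)
      exact ⟨‖f (T x₁)‖, x₁, f, hx₁n, hf1, by rw [hfx, hx₁n, ofReal_one], rfl⟩
    have hS'bdd : BddBelow S' := by
      refine ⟨0, ?_⟩
      rintro r ⟨x, f, _, _, _, rfl⟩
      exact norm_nonneg _
    have hSbdd : BddBelow S := by
      refine ⟨0, ?_⟩
      rintro r ⟨x, f, _, _, _, rfl⟩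
      exact norm_nonneg _
    have hS'ne : S'.Nonempty := hSne.mono hsub
    refine le_antisymm ?_ (csInf_le_csInf hS'bdd hSne hsub)
    apply le_csInf hS'ne
    rintro r ⟨xs, F, hxs, hF, hFxs, rfl⟩
    apply le_of_forall_pos_le_add
    intro ε₀ hε₀
    have hTnn : (0:ℝ) ≤ ‖T‖ := norm_nonneg T
    set ε : ℝ := min (1/2) (ε₀ / (2 + 4 * ‖T‖)) with hεdef
    have hden : (0:ℝ) < 2 + 4 * ‖T‖ := by linarith
    have hεpos : 0 < ε := lt_min (by norm_num) (div_pos hε₀ hden)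
    have hεle : ε ≤ 1/2 := min_le_left _ _
    have hεbound : ε * (2 + 4 * ‖T‖) ≤ ε₀ := by
      have h1 : ε ≤ ε₀ / (2 + 4 * ‖T‖) := min_le_right _ _
      rw [← le_div_iff₀ hden]
      exact h1
    have hδpos : (0:ℝ) < ε ^ 2 := by positivity
    obtain ⟨x, hxball, hg1, hg2⟩ := goldstine_two F hF.le xs (opAdjoint T xs) hδpos
    have hrex : 1 - ε ^ 2 ≤ re (xs x) := by
      rw [hFxs] at hg1
      have h1 : |re (xs x - 1)| ≤ ‖xs x - 1‖ := abs_re_le_norm _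
      rw [map_sub] at h1
      simp only [RCLike.one_re] at h1
      have := abs_le.1 h1
      linarith [this.1]
    obtain ⟨y, g, hy1, hgn1, hgy1, hyx, hgf⟩ :=
      bishop_phelps_bollobas x xs hxball hxs hεpos hεle hrex
    have hmem : ‖g (T y)‖ ∈ S := ⟨y, g, hy1, hgn1, hgy1, rfl⟩
    have e1 : ‖g (T y) - xs (T y)‖ ≤ (ε ^ 2 + 2 * ε) * ‖T‖ := by
      have h1 : g (T y) - xs (T y) = (g - xs) (T y) := rfl
      rw [h1]
      calc ‖(g - xs) (T y)‖ ≤ ‖g - xs‖ * ‖T y‖ := (g - xs).le_opNorm _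
        _ ≤ (ε ^ 2 + 2 * ε) * (‖T‖ * ‖y‖) := by
            apply mul_le_mul hgf (T.le_opNorm y) (norm_nonneg _)
            positivity
        _ = (ε ^ 2 + 2 * ε) * ‖T‖ := by rw [hy1, mul_one]
    have e2 : ‖xs (T y) - xs (T x)‖ ≤ ‖T‖ * ε := by
      have h1 : xs (T y) - xs (T x) = xs (T (y - x)) := by rw [map_sub, map_sub]
      rw [h1]
      calc ‖xs (T (y - x))‖ ≤ ‖xs‖ * ‖T (y - x)‖ := xs.le_opNorm _
        _ ≤ 1 * (‖T‖ * ‖y - x‖) := by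
            rw [hxs]
            apply mul_le_mul le_rfl (T.le_opNorm _) (norm_nonneg _) zero_le_one
        _ = ‖T‖ * ‖y - x‖ := one_mul _
        _ ≤ ‖T‖ * ε := mul_le_mul_of_nonneg_left hyx hTnn
    have e3 : ‖xs (T x) - F (opAdjoint T xs)‖ < ε ^ 2 := by
      rw [← hadj xs x]
      exact hg2
    have htot : ‖g (T y)‖ ≤ ‖F (opAdjoint T xs)‖ + ((ε ^ 2 + 2 * ε) * ‖T‖ + ‖T‖ * ε + ε ^ 2) := by
      have htri : ‖g (T y)‖ ≤ ‖g (T y) - xs (T y)‖ + ‖xs (T y) - xs (T x)‖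
          + ‖xs (T x) - F (opAdjoint T xs)‖ + ‖F (opAdjoint T xs)‖ := by
        have hsplit : g (T y) = (g (T y) - xs (T y)) + (xs (T y) - xs (T x))
            + (xs (T x) - F (opAdjoint T xs)) + F (opAdjoint T xs) := by abel
        calc ‖g (T y)‖ = ‖(g (T y) - xs (T y)) + (xs (T y) - xs (T x))
            + (xs (T x) - F (opAdjoint T xs)) + F (opAdjoint T xs)‖ := by rw [← hsplit]
          _ ≤ _ := by
              refine (norm_add_le _ _).trans ?_
              gcongr
              refine (norm_add_le _ _).trans ?_
              gcongr
              exact norm_add_le _ _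
      linarith [e1, e2, e3.le, htri]
    have hkey : (ε ^ 2 + 2 * ε) * ‖T‖ + ‖T‖ * ε + ε ^ 2 ≤ ε₀ := by
      have hsq : ε ^ 2 ≤ ε * (1/2) := by nlinarith
      nlinarith [hεbound, hεpos.le, hTnn]
    calc sInf S ≤ ‖g (T y)‖ := csInf_le hSbdd hmem
      _ ≤ ‖F (opAdjoint T xs)‖ + ε₀ := by linarith
  · push_neg at hX
    have hSempty : S = ∅ := by
      rw [Set.eq_empty_iff_forall_notMem]
      rintro r ⟨x, f, hx, -, -, -⟩
      rw [hX x, norm_zero] at hx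
      norm_num at hx
    have hS'empty : S' = ∅ := by
      rw [Set.eq_empty_iff_forall_notMem]
      rintro r ⟨x, f, hx, -, -, -⟩
      have hx0 : x = 0 := by
        ext z
        rw [hX z, map_zero]
        rfl
      rw [hx0, norm_zero] at hx
      norm_num at hx
    rw [hSempty, hS'empty]
end

section
/- For any Banach space X, every bounded linear operator T ∈ L(X) with c(T) = 0 can be approximated in operator norm by Crawford number attaining operators: for each ε > 0 there exists S ∈ CNA(X) with ‖S − T‖ < ε and c(S) = 0. -/
section Crawford

variable {𝕜 : Type*} [RCLike 𝕜] {E : Type*} [NormedAddCommGroup E] [NormedSpace 𝕜 E]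

lemma bddBelow_crawford_set (T : E →L[𝕜] E) :
    BddBelow {r : ℝ | ∃ (x : E) (f : E →L[𝕜] 𝕜), ‖x‖ = 1 ∧ ‖f‖ = 1 ∧ f x = 1 ∧ r = ‖f (T x)‖} :=
  ⟨0, fun _ ⟨_, _, _, _, _, hr⟩ => hr ▸ norm_nonneg _⟩

lemma crawford_nonneg (T : E →L[𝕜] E) : 0 ≤ crawford T :=
  Real.sInf_nonneg fun _ ⟨_, _, _, _, _, hr⟩ => hr ▸ norm_nonneg _

lemma crawford_le_norm_apply (T : E →L[𝕜] E) {x : E} {f : E →L[𝕜] 𝕜}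
    (hx : ‖x‖ = 1) (hf : ‖f‖ = 1) (hfx : f x = 1) : crawford T ≤ ‖f (T x)‖ :=
  csInf_le (bddBelow_crawford_set T) ⟨x, f, hx, hf, hfx, rfl⟩

lemma crawford_eq_zero_and_attains_of_apply_eq_zero {T : E →L[𝕜] E} {x : E} {f : E →L[𝕜] 𝕜}
    (hx : ‖x‖ = 1) (hf : ‖f‖ = 1) (hfx : f x = 1) (hT : f (T x) = 0) :
    crawford T = 0 ∧ CrawfordAttains T := by
  have hzero : crawford T = 0 :=
    le_antisymm (by simpa [hT] using crawford_le_norm_apply T hx hf hfx) (crawford_nonneg T)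
  exact ⟨hzero, x, f, hx, hf, hfx, by rw [hzero, hT, norm_zero]⟩

lemma crawford_sub_apply_state_smul_id_eq_zero_and_attains (T : E →L[𝕜] E) {x : E} {f : E →L[𝕜] 𝕜}
    (hx : ‖x‖ = 1) (hf : ‖f‖ = 1) (hfx : f x = 1) :
    crawford (T - f (T x) • ContinuousLinearMap.id 𝕜 E) = 0 ∧
      CrawfordAttains (T - f (T x) • ContinuousLinearMap.id 𝕜 E) :=
  crawford_eq_zero_and_attains_of_apply_eq_zero hx hf hfx (by simp [hfx])

lemma exists_state [Nontrivial E] :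
    ∃ (x : E) (f : E →L[𝕜] 𝕜), ‖x‖ = 1 ∧ ‖f‖ = 1 ∧ f x = 1 := by
  obtain ⟨z, hz⟩ := exists_ne (0 : E)
  obtain ⟨g, hg, hgz⟩ := exists_dual_vector 𝕜 z (norm_ne_zero_iff.mpr hz)
  refine ⟨(‖z‖⁻¹ : 𝕜) • z, g, norm_smul_inv_norm hz, hg, ?_⟩
  rw [map_smul, hgz, smul_eq_mul, inv_mul_cancel₀ (by exact_mod_cast norm_ne_zero_iff.mpr hz)]

lemma exists_state_norm_apply_lt_of_crawford_lt [Nontrivial E] {T : E →L[𝕜] E} {ε : ℝ}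
    (h : crawford T < ε) :
    ∃ (x : E) (f : E →L[𝕜] 𝕜), ‖x‖ = 1 ∧ ‖f‖ = 1 ∧ f x = 1 ∧ ‖f (T x)‖ < ε := by
  obtain ⟨x, f, hx, hf, hfx⟩ := exists_state (𝕜 := 𝕜) (E := E)
  obtain ⟨_, ⟨y, g, hy, hg, hgy, rfl⟩, hlt⟩ :=
    (csInf_lt_iff (bddBelow_crawford_set T) ⟨_, x, f, hx, hf, hfx, rfl⟩).mp h
  exact ⟨y, g, hy, hg, hgy, hlt⟩

lemma norm_smul_id_le (c : 𝕜) : ‖c • ContinuousLinearMap.id 𝕜 E‖ ≤ ‖c‖ :=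
  calc ‖c • ContinuousLinearMap.id 𝕜 E‖ ≤ ‖c‖ * ‖ContinuousLinearMap.id 𝕜 E‖ :=
        ContinuousLinearMap.opNorm_smul_le c _
    _ ≤ ‖c‖ := mul_le_of_le_one_right (norm_nonneg c) ContinuousLinearMap.norm_id_le

end Crawford

theorem crawford_zero_approx_attaining_general
    {𝕜 : Type*} [RCLike 𝕜] {X : Type*} [NormedAddCommGroup X] [NormedSpace 𝕜 X]
    [Nontrivial X]
    (T : X →L[𝕜] X) (hT : crawford T = 0) :
    ∀ ε : ℝ, 0 < ε → ∃ S : X →L[𝕜] X,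
      ‖S - T‖ < ε ∧ crawford S = 0 ∧ CrawfordAttains S := by
  intro ε hε
  obtain ⟨x₀, f₀, hx₀, hf₀, hfx₀, hsmall⟩ :=
    exists_state_norm_apply_lt_of_crawford_lt (hT.trans_lt hε)
  refine ⟨T - f₀ (T x₀) • ContinuousLinearMap.id 𝕜 X, ?_,
    crawford_sub_apply_state_smul_id_eq_zero_and_attains T hx₀ hf₀ hfx₀⟩
  rw [sub_sub_cancel_left, norm_neg]
  exact (norm_smul_id_le _).trans_lt hsmall

theorem crawford_zero_approx_attaining
    {𝕜 : Type*} [RCLike 𝕜] {X : Type*} [NormedAddCommGroup X] [NormedSpace 𝕜 X]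
    [CompleteSpace X] [Nontrivial X]
    (T : X →L[𝕜] X) (hT : crawford T = 0) :
    ∀ ε : ℝ, 0 < ε → ∃ S : X →L[𝕜] X,
      ‖S - T‖ < ε ∧ crawford S = 0 ∧ CrawfordAttains S :=
  crawford_zero_approx_attaining_general T hT
end

section
/- For every Banach space X, the set of compact operators on X which attain their Crawford number is dense (in operator norm) in the space K(X) of all compact operators on X. -/
open Metric Set

/-- In a nontrivial normed space over `RCLike` field there is a norm-one vector with
a norming functional. -/
lemma exists_pi_pair {𝕜 : Type*} [RCLike 𝕜] {X : Type*} [NormedAddCommGroup X]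
    [NormedSpace 𝕜 X] [Nontrivial X] :
    ∃ (x : X) (f : X →L[𝕜] 𝕜), ‖x‖ = 1 ∧ ‖f‖ = 1 ∧ f x = 1 := by
  obtain ⟨y, hy⟩ := exists_ne (0 : X)
  set x : X := (‖y‖⁻¹ : 𝕜) • y with hxdef
  have hx1 : ‖x‖ = 1 := norm_smul_inv_norm hy
  have hx0 : x ≠ 0 := by
    intro h; rw [h, norm_zero] at hx1; exact one_ne_zero hx1.symm
  obtain ⟨f, hf1, hfx⟩ := exists_dual_vector 𝕜 x (norm_ne_zero_iff.mpr hx0)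
  exact ⟨x, f, hx1, hf1, by rw [hfx, hx1, RCLike.ofReal_one]⟩

/-- A compact operator on an infinite-dimensional space has vanishing minimum norm. -/
lemma exists_unit_small_image {𝕜 : Type*} [RCLike 𝕜] {X : Type*} [NormedAddCommGroup X]
    [NormedSpace 𝕜 X] [CompleteSpace X] (hfd : ¬ FiniteDimensional 𝕜 X)
    (T : X →L[𝕜] X) (hT : IsCompactOperator T) {δ : ℝ} (hδ : 0 < δ) :
    ∃ x : X, ‖x‖ = 1 ∧ ‖T x‖ < δ := by
  by_contra hcon
  push_neg at hcon
  -- T is bounded below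
  set Kc : NNReal := ⟨δ⁻¹, by positivity⟩ with hKc
  have hbound : ∀ x : X, ‖x‖ ≤ (Kc : ℝ) * ‖T x‖ := by
    intro x
    rcases eq_or_ne x 0 with rfl | hx0
    · simp
    · have hx1 : ‖(‖x‖⁻¹ : 𝕜) • x‖ = 1 := norm_smul_inv_norm hx0
      have := hcon ((‖x‖⁻¹ : 𝕜) • x) hx1
      rw [map_smul, norm_smul] at this
      have hxn : (0:ℝ) < ‖x‖ := norm_pos_iff.mpr hx0
      have hnorminv : ‖((‖x‖ : 𝕜))⁻¹‖ = ‖x‖⁻¹ := by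
        rw [norm_inv, RCLike.norm_ofReal, abs_of_nonneg hxn.le]
      rw [hnorminv] at this
      have h2 : δ * ‖x‖ ≤ ‖T x‖ := by
        have h := mul_le_mul_of_nonneg_right this hxn.le
        calc δ * ‖x‖ ≤ ‖x‖⁻¹ * ‖T x‖ * ‖x‖ := h
          _ = ‖T x‖ := by field_simp
      show ‖x‖ ≤ δ⁻¹ * ‖T x‖
      rw [le_inv_mul_iff₀ hδ]
      exact h2
  have hanti : AntilipschitzWith Kc T :=
    ContinuousLinearMap.antilipschitz_of_bound T hbound
  have hce : Topology.IsClosedEmbedding T := hanti.isClosedEmbedding T.uniformContinuous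
  obtain ⟨K, hK, hTK⟩ := hT
  rw [Metric.mem_nhds_iff] at hTK
  obtain ⟨r, hr, hball⟩ := hTK
  have hsub : closedBall (0 : X) (r/2) ⊆ T ⁻¹' K :=
    (closedBall_subset_ball (by linarith)).trans hball
  have hpre : IsCompact (T ⁻¹' K) := hce.isCompact_preimage hK
  have hcb : IsCompact (closedBall (0 : X) (r/2)) :=
    hpre.of_isClosed_subset Metric.isClosed_closedBall hsub
  exact hfd (FiniteDimensional.of_isCompact_closedBall₀ 𝕜 (by linarith) hcb)

/-- In a finite-dimensional space, every operator attains its Crawford number. -/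
lemma crawfordAttains_of_finiteDimensional {𝕜 : Type*} [RCLike 𝕜] {X : Type*}
    [NormedAddCommGroup X] [NormedSpace 𝕜 X] [Nontrivial X] [FiniteDimensional 𝕜 X]
    (T : X →L[𝕜] X) : CrawfordAttains T := by
  haveI : ProperSpace X := FiniteDimensional.proper_rclike 𝕜 X
  haveI : ProperSpace (X →L[𝕜] 𝕜) := FiniteDimensional.proper_rclike 𝕜 _
  set Pi' : Set (X × (X →L[𝕜] 𝕜)) := {p | ‖p.1‖ = 1 ∧ ‖p.2‖ = 1 ∧ p.2 p.1 = 1} with hPi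
  have hne : Pi'.Nonempty := by
    obtain ⟨x, f, h1, h2, h3⟩ := exists_pi_pair (𝕜 := 𝕜) (X := X)
    exact ⟨(x, f), h1, h2, h3⟩
  have heval : Continuous fun p : X × (X →L[𝕜] 𝕜) => p.2 p.1 :=
    isBoundedBilinearMap_apply.continuous.comp continuous_swap
  have hclosed : IsClosed Pi' := by
    apply IsClosed.inter
    · exact isClosed_eq (continuous_norm.comp continuous_fst) continuous_const
    · exact IsClosed.inter
        (isClosed_eq (continuous_norm.comp continuous_snd) continuous_const)
        (isClosed_eq heval continuous_const)
  have hPc : IsCompact Pi' := by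
    apply IsCompact.of_isClosed_subset
      ((isCompact_closedBall (0:X) 1).prod (isCompact_closedBall (0:X →L[𝕜] 𝕜) 1)) hclosed
    rintro ⟨x, f⟩ ⟨h1, h2, -⟩
    exact ⟨by simp [mem_closedBall_zero_iff, h1], by simp [mem_closedBall_zero_iff, h2]⟩
  have hgc : Continuous fun p : X × (X →L[𝕜] 𝕜) => ‖p.2 (T p.1)‖ := by
    have : Continuous fun p : X × (X →L[𝕜] 𝕜) => p.2 (T p.1) :=
      isBoundedBilinearMap_apply.continuous.comp
        ((continuous_snd).prodMk (T.continuous.comp continuous_fst))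
    exact this.norm
  obtain ⟨p, hpP, hpmin⟩ := hPc.exists_isMinOn hne hgc.continuousOn
  refine ⟨p.1, p.2, hpP.1, hpP.2.1, hpP.2.2, ?_⟩
  unfold crawford
  apply le_antisymm
  · apply csInf_le
    · exact ⟨0, by rintro r ⟨x, f, -, -, -, rfl⟩; positivity⟩
    · exact ⟨p.1, p.2, hpP.1, hpP.2.1, hpP.2.2, rfl⟩
  · refine le_csInf ⟨‖p.2 (T p.1)‖, p.1, p.2, hpP.1, hpP.2.1, hpP.2.2, rfl⟩ ?_
    rintro r ⟨x, f, h1, h2, h3, rfl⟩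
    exact hpmin (⟨h1, h2, h3⟩ : (x, f) ∈ Pi')

/-- A rank-one operator is compact. -/
lemma isCompactOperator_smulRight {𝕜 : Type*} [RCLike 𝕜] {X : Type*} [NormedAddCommGroup X]
    [NormedSpace 𝕜 X] (f : X →L[𝕜] 𝕜) (v : X) :
    IsCompactOperator (f.smulRight v) := by
  refine ⟨(fun c : 𝕜 => c • v) '' closedBall 0 ‖f‖,
    (isCompact_closedBall (0:𝕜) ‖f‖).image (continuous_id.smul continuous_const), ?_⟩
  apply Filter.mem_of_superset (closedBall_mem_nhds (0:X) one_pos)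
  intro x hx
  rw [mem_closedBall_zero_iff] at hx
  refine ⟨f x, ?_, rfl⟩
  rw [mem_closedBall_zero_iff]
  calc ‖f x‖ ≤ ‖f‖ * ‖x‖ := f.le_opNorm x
    _ ≤ ‖f‖ * 1 := mul_le_mul_of_nonneg_left hx (norm_nonneg f)
    _ = ‖f‖ := mul_one _

theorem compact_crawford_attaining_dense
    {𝕜 : Type*} [RCLike 𝕜] {X : Type*} [NormedAddCommGroup X] [NormedSpace 𝕜 X]
    [CompleteSpace X] [Nontrivial X]
    (T : X →L[𝕜] X) (hT : IsCompactOperator T) :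
    ∀ ε : ℝ, 0 < ε → ∃ S : X →L[𝕜] X,
      IsCompactOperator S ∧ ‖S - T‖ < ε ∧ CrawfordAttains S := by
  intro ε hε
  by_cases hfd : FiniteDimensional 𝕜 X
  · exact ⟨T, hT, by simpa using hε, crawfordAttains_of_finiteDimensional T⟩
  · obtain ⟨x₀, hx₀, hTx₀⟩ := exists_unit_small_image hfd T hT (half_pos hε)
    have hx₀0 : x₀ ≠ 0 := by
      intro h; rw [h, norm_zero] at hx₀; exact one_ne_zero hx₀.symm
    obtain ⟨f₀, hf₀, hf₀x₀'⟩ := exists_dual_vector 𝕜 x₀ (norm_ne_zero_iff.mpr hx₀0)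
    have hf₀x₀ : f₀ x₀ = 1 := by rw [hf₀x₀', hx₀, RCLike.ofReal_one]
    set G : X →L[𝕜] X := f₀.smulRight (T x₀) with hG
    have hGnorm : ‖G‖ = ‖T x₀‖ := by
      rw [hG, ContinuousLinearMap.norm_smulRight_apply, hf₀, one_mul]
    set S : X →L[𝕜] X := T - G with hS
    have hSx₀ : S x₀ = 0 := by
      simp [hS, hG, ContinuousLinearMap.smulRight_apply, hf₀x₀, one_smul]
    refine ⟨S, ?_, ?_, ?_⟩
    · have hGc : IsCompactOperator G := isCompactOperator_smulRight f₀ (T x₀)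
      have := hT.sub hGc
      have hcoe : (⇑S : X → X) = ⇑T - ⇑G := by
        ext x; simp [hS]
      rw [show (IsCompactOperator S) = IsCompactOperator (⇑S) from rfl, hcoe]
      exact this
    · have : S - T = -G := by rw [hS]; abel
      rw [this, norm_neg, hGnorm]
      linarith
    · refine ⟨x₀, f₀, hx₀, hf₀, hf₀x₀, ?_⟩
      have hval : ‖f₀ (S x₀)‖ = 0 := by rw [hSx₀, map_zero, norm_zero]
      rw [hval]
      unfold crawford
      apply le_antisymm
      · apply csInf_le
        · exact ⟨0, by rintro r ⟨x, f, -, -, -, rfl⟩; positivity⟩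
        · exact ⟨x₀, f₀, hx₀, hf₀, hf₀x₀, hval.symm⟩
      · refine le_csInf ⟨0, x₀, f₀, hx₀, hf₀, hf₀x₀, hval.symm⟩ ?_
        rintro r ⟨x, f, -, -, -, rfl⟩
        positivity
end

section
/- Let C be a nonempty bounded closed convex subset of a real Banach space X. Then the set of functionals x* ∈ X* such that |x*| attains its minimum on C (i.e., there exists c₀ ∈ C with |x*(c₀)| = inf_{c ∈ C} |x*(c)|) is norm-dense in X*. -/
/-!
Fix `c₁ ∈ C`. If `f c₁ = 0` then `|f|` is minimal at `c₁`; otherwise, up to replacing `f` by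
`-f`, `f c₁ > 0`. The Bishop–Phelps theorem (Ekeland's principle on `C`, then a Hahn–Banach
separation in `X × ℝ`) gives `g` arbitrarily close to `f` that attains its minimum on `C` at some
`c₀`, and close enough that still `g c₁ ≥ 0`. If `g c₀ ≥ 0` then `|g| = g` on `C`; otherwise `g`
changes sign on the connected set `C`, so it vanishes there.
-/

open Set Filter Topology Metric

theorem exists_mem_forall_le_add_of_bddBelow {α : Type*} {F : α → ℝ} {s : Set α}
    (hs : s.Nonempty) (hbdd : BddBelow (F '' s)) {δ : ℝ} (hδ : 0 < δ) :
    ∃ y ∈ s, ∀ z ∈ s, F y ≤ F z + δ := by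
  obtain ⟨_, ⟨y, hy, rfl⟩, hlt⟩ :=
    exists_lt_of_csInf_lt (hs.image F) (lt_add_of_pos_right (sInf (F '' s)) hδ)
  exact ⟨y, hy, fun z hz => by linarith [csInf_le hbdd (mem_image_of_mem F hz)]⟩

section Ekeland

variable {α : Type*} [MetricSpace α] {F : α → ℝ} {ε : ℝ}

def ekelandSet (F : α → ℝ) (ε : ℝ) (x : α) : Set α :=
  {y | F y + ε * dist y x ≤ F x}

theorem mem_ekelandSet_self (x : α) : x ∈ ekelandSet F ε x := by
  simp [ekelandSet]

theorem ekelandSet_subset (hε : 0 ≤ ε) {x y : α} (hy : y ∈ ekelandSet F ε x) :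
    ekelandSet F ε y ⊆ ekelandSet F ε x := fun z hz => by
  simp only [ekelandSet, mem_ofPred_eq] at *
  nlinarith [dist_triangle z y x]

theorem isClosed_ekelandSet (hF : LowerSemicontinuous F) (x : α) :
    IsClosed (ekelandSet F ε x) :=
  (hF.add (continuous_const.mul (continuous_id.dist continuous_const)).lowerSemicontinuous
    ).isClosed_preimage (F x)

theorem ekelandSet_subset_closedBall (hε : 0 < ε) {x y : α} {δ : ℝ}
    (hy : y ∈ ekelandSet F ε x) (hmin : ∀ z ∈ ekelandSet F ε x, F y ≤ F z + ε * δ) :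
    ekelandSet F ε y ⊆ closedBall y δ := fun z hz => by
  have hle := hmin z (ekelandSet_subset hε.le hy hz)
  simp only [ekelandSet, mem_ofPred_eq] at hz
  rw [mem_closedBall]
  nlinarith

/-- Ekeland's variational principle, weak form. -/
theorem exists_forall_le_add_mul_dist [CompleteSpace α] [Nonempty α]
    (hF : LowerSemicontinuous F) (hbdd : BddBelow (range F)) (hε : 0 < ε) :
    ∃ x₀, ∀ x, F x₀ ≤ F x + ε * dist x x₀ := by
  have step (n : ℕ) (x : α) : ∃ y ∈ ekelandSet F ε x,
      ∀ z ∈ ekelandSet F ε x, F y ≤ F z + ε * (1 / 2) ^ n :=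
    exists_mem_forall_le_add_of_bddBelow ⟨x, mem_ekelandSet_self x⟩
      (hbdd.mono (image_subset_range F _)) (by positivity)
  choose next next_mem next_le using step
  obtain ⟨x₀⟩ := ‹Nonempty α›
  let u : ℕ → α := fun n => Nat.rec x₀ next n
  let S : ℕ → Set α := fun n => ekelandSet F ε (u (n + 1))
  have anti : Antitone S :=
    antitone_nat_of_succ_le fun n => ekelandSet_subset hε.le (next_mem (n + 1) (u (n + 1)))
  have small (n : ℕ) : S n ⊆ closedBall (u (n + 1)) ((1 / 2) ^ n) :=
    ekelandSet_subset_closedBall hε (next_mem n (u n)) (next_le n (u n))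
  have cauchy : CauchySeq fun n => u (n + 1) :=
    cauchySeq_of_le_geometric (1 / 2) 1 (by norm_num) fun n => by
      rw [one_mul, dist_comm]
      exact small n (next_mem (n + 1) (u (n + 1)))
  obtain ⟨x₁, hx₁⟩ := cauchySeq_tendsto_of_complete cauchy
  have mem_S (n : ℕ) : x₁ ∈ S n :=
    (isClosed_ekelandSet hF _).mem_of_tendsto hx₁
      (eventually_atTop.2 ⟨n, fun m hm => anti hm (mem_ekelandSet_self _)⟩)
  refine ⟨x₁, fun x => le_of_not_gt fun hx => ?_⟩
  -- `x` lies in every `S n`, so `u (n + 1) → x` and hence `x = x₁`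
  have hx_lim : Tendsto (fun n => u (n + 1)) atTop (𝓝 x) := by
    refine tendsto_iff_dist_tendsto_zero.2 (squeeze_zero (fun _ => dist_nonneg) (fun n => ?_)
      (tendsto_pow_atTop_nhds_zero_of_lt_one (by norm_num) (by norm_num : (1 / 2 : ℝ) < 1)))
    rw [dist_comm]
    exact small n (ekelandSet_subset hε.le (mem_S n) hx.le)
  rw [tendsto_nhds_unique hx_lim hx₁, dist_self, mul_zero, add_zero] at hx
  exact lt_irrefl _ hx

end Ekeland

theorem exists_isMinOn_abs_of_isMinOn {α : Type*} [TopologicalSpace α] {C : Set α}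
    (hC : IsPreconnected C) {g : α → ℝ} (hg : ContinuousOn g C) {c₀ c₁ : α} (hc₀ : c₀ ∈ C)
    (hmin : IsMinOn g C c₀) (hc₁ : c₁ ∈ C) (hg₁ : 0 ≤ g c₁) :
    ∃ c ∈ C, IsMinOn (fun x => |g x|) C c := by
  rcases le_or_gt 0 (g c₀) with hg₀ | hg₀
  · refine ⟨c₀, hc₀, isMinOn_iff.2 fun c hc => ?_⟩
    rw [abs_of_nonneg hg₀, abs_of_nonneg (hg₀.trans (isMinOn_iff.1 hmin c hc))]
    exact isMinOn_iff.1 hmin c hc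
  · obtain ⟨c, hc, hgc⟩ := hC.intermediate_value hc₀ hc₁ hg ⟨hg₀.le, hg₁⟩
    exact ⟨c, hc, isMinOn_iff.2 fun x _ => by simp [hgc]⟩

section NormedSpace

variable {X : Type*} [NormedAddCommGroup X] [NormedSpace ℝ X]

theorem exists_norm_le_forall_le_of_le_mul_norm {K : Set X} (hK : Convex ℝ K) (h0 : (0 : X) ∈ K)
    (f : X →L[ℝ] ℝ) {ε : ℝ} (hε : 0 ≤ ε) (hf : ∀ k ∈ K, f k ≤ ε * ‖k‖) :
    ∃ G : X →L[ℝ] ℝ, ‖G‖ ≤ ε ∧ ∀ k ∈ K, f k ≤ G k := by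
  -- separate the open epigraph of `ε ‖·‖` from the graph of `f` over `K` in `X × ℝ`
  set A : Set (X × ℝ) := {p | p.1 ∈ univ ∧ ε * ‖p.1‖ < p.2}
  have hA_conv : Convex ℝ A := ((convexOn_norm convex_univ).smul hε).convex_strict_epigraph
  have hA_open : IsOpen A := by
    simp only [A, mem_univ, true_and]
    exact isOpen_lt (continuous_const.mul continuous_fst.norm) continuous_snd
  have disj : Disjoint A (LinearMap.id.prod f.toLinearMap '' K) := by
    rw [disjoint_right]
    rintro _ ⟨k, hk, rfl⟩ ⟨-, hlt⟩
    exact (hf k hk).not_gt hlt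
  obtain ⟨φ, u, hφA, hφB⟩ :=
    geometric_hahn_banach_open hA_conv hA_open (hK.linear_image _) disj
  set L := φ.comp (ContinuousLinearMap.inl ℝ X ℝ)
  set l := φ (0, 1)
  have hφ (y : X) (s : ℝ) : φ (y, s) = L y + s * l := by
    rw [show (y, s) = (y, 0) + s • ((0 : X), (1 : ℝ)) by ext <;> simp, map_add, map_smul,
      smul_eq_mul]
    rfl
  have hA_mem {y : X} {s : ℝ} (hs : ε * ‖y‖ < s) : L y + s * l < u :=
    hφ y s ▸ hφA _ ⟨trivial, hs⟩
  have hu_nonpos : u ≤ 0 := by simpa [hφ] using hφB _ ⟨0, h0, rfl⟩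
  have hl : l < 0 := by simpa using (hA_mem (y := 0) (s := 1) (by simp)).trans_le hu_nonpos
  have hu_nonneg : 0 ≤ u := by
    by_contra! hu
    have := hA_mem (y := 0) (s := u / l) (by simpa using div_pos_of_neg_of_neg hu hl)
    simp [div_mul_cancel₀ u hl.ne] at this
  set G : X →L[ℝ] ℝ := (-l)⁻¹ • L
  have hG (y : X) : G y ≤ ε * ‖y‖ := by
    refine le_of_forall_gt_imp_ge_of_dense fun s hs => le_of_lt ?_
    rw [smul_apply, smul_eq_mul, inv_mul_lt_iff₀ (neg_pos.2 hl)]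
    linarith [hA_mem hs]
  refine ⟨G, ContinuousLinearMap.opNorm_le_bound _ hε fun y => ?_, fun k hk => ?_⟩
  · rw [Real.norm_eq_abs, abs_le]
    have hneg := hG (-y)
    rw [map_neg, norm_neg] at hneg
    exact ⟨by linarith, hG y⟩
  · have : u ≤ L k + f k * l := by rw [← hφ]; exact hφB _ ⟨k, hk, rfl⟩
    rw [smul_apply, smul_eq_mul, le_inv_mul_iff₀ (neg_pos.2 hl)]
    linarith

/-- The Bishop–Phelps theorem, for minima. -/
theorem exists_norm_sub_le_isMinOn [CompleteSpace X] {C : Set X} (hne : C.Nonempty)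
    (hbdd : Bornology.IsBounded C) (hcl : IsClosed C) (hconv : Convex ℝ C) (f : X →L[ℝ] ℝ)
    {ε : ℝ} (hε : 0 < ε) : ∃ g : X →L[ℝ] ℝ, ‖g - f‖ ≤ ε ∧ ∃ c₀ ∈ C, IsMinOn g C c₀ := by
  have := hne.to_subtype
  have := hcl.completeSpace_coe
  have hbelow : BddBelow (range fun c : C => f c) := by
    rw [← image_eq_range]
    exact (f.lipschitz.isBounded_image hbdd).bddBelow
  obtain ⟨⟨c₀, hc₀⟩, hekeland⟩ := exists_forall_le_add_mul_dist
    (f.continuous.comp continuous_subtype_val).lowerSemicontinuous hbelow hε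
  obtain ⟨G, hG, hfG⟩ := exists_norm_le_forall_le_of_le_mul_norm
    (hconv.translate_preimage_right c₀) (by simpa using hc₀) (-f) hε.le fun k hk => by
      have := hekeland ⟨c₀ + k, hk⟩
      simp only [Function.comp_apply, Subtype.dist_eq, dist_eq_norm, add_sub_cancel_left,
        map_add] at this
      simp only [neg_apply]
      linarith
  refine ⟨f + G, by simpa using hG, c₀, hc₀, isMinOn_iff.2 fun c hc => ?_⟩
  have := hfG (c - c₀) (by simpa using hc)
  simp only [neg_apply, add_apply, map_sub] at *
  linarith

theorem exists_dist_lt_isMinOn_abs [CompleteSpace X] {C : Set X} (hbdd : Bornology.IsBounded C)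
    (hcl : IsClosed C) (hconv : Convex ℝ C) (f : X →L[ℝ] ℝ) {c₁ : X} (hc₁ : c₁ ∈ C)
    (hf₁ : 0 < f c₁) {r : ℝ} (hr : 0 < r) :
    ∃ g : X →L[ℝ] ℝ, dist g f < r ∧ ∃ c ∈ C, IsMinOn (fun x => |g x|) C c := by
  -- `‖c₁‖ * δ < f c₁` keeps every `g` with `‖g - f‖ ≤ δ` nonnegative at `c₁`
  obtain ⟨δ, hδ, hδc₁⟩ := exists_pos_mul_lt hf₁ ‖c₁‖
  obtain ⟨g, hgf, c₀, hc₀, hmin⟩ :=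
    exists_norm_sub_le_isMinOn ⟨c₁, hc₁⟩ hbdd hcl hconv f (lt_min hδ (half_pos hr))
  have hg₁ : 0 ≤ g c₁ := by
    have hclose : f c₁ - g c₁ ≤ ‖c₁‖ * δ := calc
      f c₁ - g c₁ ≤ ‖(g - f) c₁‖ := by
        rw [sub_apply, Real.norm_eq_abs, abs_sub_comm]
        exact le_abs_self _
      _ ≤ ‖g - f‖ * ‖c₁‖ := (g - f).le_opNorm c₁
      _ ≤ ‖c₁‖ * δ := by
        rw [mul_comm]
        exact mul_le_mul_of_nonneg_left (hgf.trans (min_le_left _ _)) (norm_nonneg _)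
    linarith
  refine ⟨g, ?_, exists_isMinOn_abs_of_isMinOn hconv.isPreconnected g.continuous.continuousOn
    hc₀ hmin hc₁ hg₁⟩
  rw [dist_eq_norm]
  linarith [min_le_right δ (r / 2)]

end NormedSpace

theorem dense_min_attaining_functionals
    {X : Type*} [NormedAddCommGroup X] [NormedSpace ℝ X] [CompleteSpace X]
    (C : Set X) (hne : C.Nonempty) (hbdd : Bornology.IsBounded C)
    (hcl : IsClosed C) (hconv : Convex ℝ C) :
    Dense {f : X →L[ℝ] ℝ | ∃ c₀ ∈ C, ∀ c ∈ C, |f c₀| ≤ |f c|} := by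
  obtain ⟨c₁, hc₁⟩ := hne
  refine Metric.dense_iff.2 fun f r hr => ?_
  rcases lt_trichotomy (f c₁) 0 with hneg | hzero | hpos
  · obtain ⟨g, hgf, c, hc, hmin⟩ :=
      exists_dist_lt_isMinOn_abs hbdd hcl hconv (-f) hc₁ (by simpa using hneg) hr
    exact ⟨-g, by rwa [Metric.mem_ball, dist_neg], c, hc,
      fun x hx => by simpa using isMinOn_iff.1 hmin x hx⟩
  · exact ⟨f, Metric.mem_ball_self hr, c₁, hc₁, fun c _ => by simp [hzero]⟩
  · obtain ⟨g, hgf, c, hc, hmin⟩ := exists_dist_lt_isMinOn_abs hbdd hcl hconv f hc₁ hpos hr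
    exact ⟨g, hgf, c, hc, isMinOn_iff.1 hmin⟩
end

section
/- Let X be a Banach space and T ∈ L(X) with c(T) > 0. Define φ_T : B_X → (−∞, ∞] by φ_T(x) = (1/‖x‖)·min{|x*(T(x/‖x‖))| : (x/‖x‖, x*) ∈ Π(X)} for x ≠ 0 and φ_T(0) = ∞. Then φ_T is bounded below (by c(T)) on B_X \ {0} and lower semicontinuous on B_X. -/
open Filter Topology Metric ENNReal WeakDual StrongDual

section

variable {𝕜 : Type*} [RCLike 𝕜] {X : Type*} [NormedAddCommGroup X] [NormedSpace 𝕜 X]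

lemma ContinuousLinearMap.norm_eq_one_of_apply_eq_one {f : X →L[𝕜] 𝕜} {x : X}
    (hf : ‖f‖ ≤ 1) (hx : ‖x‖ ≤ 1) (hfx : f x = 1) : ‖f‖ = 1 := by
  refine le_antisymm hf ?_
  calc (1 : ℝ) = ‖f x‖ := by rw [hfx, norm_one]
    _ ≤ ‖f‖ * ‖x‖ := f.le_opNorm x
    _ ≤ ‖f‖ := mul_le_of_le_one_right (norm_nonneg f) hx

lemma WeakDual.tendsto_apply_of_tendsto_of_norm_le {ι : Type*} {l : Filter ι}
    {f : ι → WeakDual 𝕜 X} {g : WeakDual 𝕜 X} {u : ι → X} {x : X} {C : ℝ}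
    (hf : Tendsto f l (𝓝 g)) (hu : Tendsto u l (𝓝 x))
    (hC : ∀ᶠ i in l, ‖toStrongDual (f i)‖ ≤ C) :
    Tendsto (fun i => f i (u i)) l (𝓝 (g x)) := by
  have hfx : Tendsto (fun i => f i x) l (𝓝 (g x)) :=
    ((WeakDual.eval_continuous x).tendsto g).comp hf
  have hdiff : Tendsto (fun i => f i (u i - x)) l (𝓝 0) := by
    refine squeeze_zero_norm' ?_ (by simpa using (hu.sub_const x).norm.const_mul C)
    filter_upwards [hC] with i hi
    exact (toStrongDual (f i)).le_of_opNorm_le hi _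
  simpa using hfx.add hdiff

/-- For `‖u‖ = 1`, the minimum of `|x*(T u)|` over `(u, x*) ∈ Π(X)` in the definition of `φ_T`. -/
noncomputable def numRangeNormInf (T : X →L[𝕜] X) (u : X) : ℝ :=
  sInf {r : ℝ | ∃ f : X →L[𝕜] 𝕜, ‖f‖ = 1 ∧ f u = 1 ∧ r = ‖f (T u)‖}

variable (T : X →L[𝕜] X)

lemma numRangeNormInf_le {u : X} {f : X →L[𝕜] 𝕜} (hf : ‖f‖ = 1) (hfu : f u = 1) :
    numRangeNormInf T u ≤ ‖f (T u)‖ :=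
  csInf_le ⟨0, by rintro r ⟨g, -, -, rfl⟩; positivity⟩ ⟨f, hf, hfu, rfl⟩

lemma exists_norm_apply_eq_numRangeNormInf {u : X} (hu : ‖u‖ = 1) :
    ∃ f : X →L[𝕜] 𝕜, ‖f‖ = 1 ∧ f u = 1 ∧ ‖f (T u)‖ = numRangeNormInf T u := by
  set K : Set (WeakDual 𝕜 X) := toStrongDual ⁻¹' closedBall 0 1 ∩ {f | f u = 1}
  have hK : IsCompact K := (WeakDual.isCompact_closedBall 0 1).inter_right
    (isClosed_eq (WeakDual.eval_continuous u) continuous_const)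
  have hK_nonempty : K.Nonempty := by
    obtain ⟨g, hg, hgu⟩ := exists_dual_vector'' 𝕜 u
    exact ⟨toWeakDual g, by simpa using hg, by simp [hgu, hu]⟩
  obtain ⟨f, ⟨hf, hfu⟩, hmin⟩ := hK.exists_isMinOn hK_nonempty
    ((WeakDual.eval_continuous (T u)).norm.continuousOn)
  have hf_norm : ‖toStrongDual f‖ = 1 :=
    (toStrongDual f).norm_eq_one_of_apply_eq_one (by simpa using hf) hu.le hfu
  refine ⟨toStrongDual f, hf_norm, hfu, le_antisymm ?_ (numRangeNormInf_le T hf_norm hfu)⟩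
  refine le_csInf ⟨_, toStrongDual f, hf_norm, hfu, rfl⟩ ?_
  rintro r ⟨g, hg, hgu, rfl⟩
  exact hmin (a := toWeakDual g) ⟨by simp [hg], hgu⟩

lemma crawford_le_numRangeNormInf {u : X} (hu : ‖u‖ = 1) :
    crawford T ≤ numRangeNormInf T u := by
  obtain ⟨f, hf, hfu, hmin⟩ := exists_norm_apply_eq_numRangeNormInf T hu
  rw [← hmin]
  exact csInf_le ⟨0, by rintro r ⟨x, g, -, -, -, rfl⟩; positivity⟩ ⟨u, f, hu, hf, hfu, rfl⟩

lemma numRangeNormInf_le_of_tendsto {ι : Type*} {l : Filter ι} [l.NeBot] {u : ι → X}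
    {t : ι → ℝ} {x : X} {s : ℝ} (hu : Tendsto u l (𝓝 x)) (ht : Tendsto t l (𝓝 s))
    (hle : ∀ᶠ i in l, ‖u i‖ = 1 ∧ numRangeNormInf T (u i) ≤ t i) :
    numRangeNormInf T x ≤ s := by
  have hchoice : ∀ i, ∃ f : WeakDual 𝕜 X, (‖u i‖ = 1 ∧ numRangeNormInf T (u i) ≤ t i) →
      ‖toStrongDual f‖ = 1 ∧ f (u i) = 1 ∧ ‖f (T (u i))‖ ≤ t i := by
    intro i
    by_cases hi : ‖u i‖ = 1 ∧ numRangeNormInf T (u i) ≤ t i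
    · obtain ⟨f, hf, hfu, hmin⟩ := exists_norm_apply_eq_numRangeNormInf T hi.1
      exact ⟨toWeakDual f, fun _ => ⟨hf, hfu, hmin.trans_le hi.2⟩⟩
    · exact ⟨0, fun h => absurd h hi⟩
  choose f hf using hchoice
  have hf_ev : ∀ᶠ i in l, ‖toStrongDual (f i)‖ = 1 ∧ f i (u i) = 1 ∧ ‖f i (T (u i))‖ ≤ t i :=
    hle.mono hf
  let 𝒰 := Ultrafilter.of l
  have h𝒰 : (𝒰 : Filter ι) ≤ l := Ultrafilter.of_le l
  obtain ⟨g, hg, hfg⟩ :=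
    (WeakDual.isCompact_closedBall (0 : StrongDual 𝕜 X) 1).ultrafilter_le_nhds (𝒰.map f) (by
      rw [Ultrafilter.coe_map, le_principal_iff]
      exact h𝒰 (hf_ev.mono fun i hi => by simp [hi.1]))
  rw [Ultrafilter.coe_map] at hfg
  have hbdd : ∀ᶠ i in (𝒰 : Filter ι), ‖toStrongDual (f i)‖ ≤ 1 :=
    h𝒰 (hf_ev.mono fun i hi => hi.1.le)
  have hgx : g x = 1 := tendsto_nhds_unique
    (WeakDual.tendsto_apply_of_tendsto_of_norm_le hfg (hu.mono_left h𝒰) hbdd)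
    (tendsto_const_nhds.congr' (h𝒰 (hf_ev.mono fun i hi => hi.2.1.symm)))
  have hx : ‖x‖ ≤ 1 := le_of_tendsto hu.norm (hle.mono fun i hi => hi.1.le)
  have hgTx : ‖g (T x)‖ ≤ s := le_of_tendsto_of_tendsto
    (WeakDual.tendsto_apply_of_tendsto_of_norm_le hfg
      ((T.continuous.tendsto x).comp (hu.mono_left h𝒰)) hbdd).norm
    (ht.mono_left h𝒰) (h𝒰 (hf_ev.mono fun i hi => hi.2.2))
  have hg_norm : ‖toStrongDual g‖ = 1 :=
    (toStrongDual g).norm_eq_one_of_apply_eq_one (by simpa using hg) hx hgx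
  exact (numRangeNormInf_le T hg_norm hgx).trans hgTx

open Classical in
/-- The paper's `φ_T`. -/
noncomputable def crawfordPhi (x : X) : ℝ≥0∞ :=
  if x = 0 then ⊤ else ENNReal.ofReal (‖x‖⁻¹ * numRangeNormInf T ((‖x‖⁻¹ : 𝕜) • x))

variable {T}

lemma crawfordPhi_le_iff {z : X} {y : ℝ≥0∞} (hy : y ≠ ⊤) :
    crawfordPhi T z ≤ y ↔ z ≠ 0 ∧ numRangeNormInf T ((‖z‖⁻¹ : 𝕜) • z) ≤ ‖z‖ * y.toReal := by
  by_cases hz : z = 0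
  · simp [crawfordPhi, hz, hy]
  · rw [crawfordPhi, if_neg hz, ENNReal.ofReal_le_iff_le_toReal hy,
      inv_mul_le_iff₀ (norm_pos_iff.2 hz)]
    exact (and_iff_right hz).symm

lemma ofReal_inv_norm_mul_crawford_le_crawfordPhi {z : X} (hz : z ≠ 0) :
    ENNReal.ofReal (‖z‖⁻¹ * crawford T) ≤ crawfordPhi T z := by
  rw [crawfordPhi, if_neg hz]
  gcongr
  exact crawford_le_numRangeNormInf T (norm_smul_inv_norm hz)

lemma lowerSemicontinuousAt_crawfordPhi_zero (hc : 0 < crawford T) :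
    LowerSemicontinuousAt (crawfordPhi T) 0 := by
  intro y hy
  have hblowup : Tendsto (fun z : X => ENNReal.ofReal (‖z‖⁻¹ * crawford T)) (𝓝[≠] 0) (𝓝 ⊤) :=
    ENNReal.tendsto_ofReal_atTop.comp
      ((tendsto_inv_nhdsGT_zero.comp tendsto_norm_nhdsNE_zero).atTop_mul_const hc)
  rw [← nhdsNE_sup_pure, eventually_sup, eventually_pure]
  refine ⟨?_, hy⟩
  filter_upwards [hblowup.eventually_const_lt (hy.trans_le le_top), self_mem_nhdsWithin]
    with z hz hz0
  exact hz.trans_le (ofReal_inv_norm_mul_crawford_le_crawfordPhi hz0)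

lemma lowerSemicontinuousAt_crawfordPhi_of_ne_zero {x : X} (hx : x ≠ 0) :
    LowerSemicontinuousAt (crawfordPhi T) x := by
  intro y hy
  by_contra hnot
  have hy_top : y ≠ ⊤ := (hy.trans_le le_top).ne
  have hfreq : ∃ᶠ z in 𝓝 x, crawfordPhi T z ≤ y := by simpa using hnot
  have : (𝓝 x ⊓ 𝓟 {z | crawfordPhi T z ≤ y}).NeBot := frequently_iff_neBot.1 hfreq
  have hnormalize : Tendsto (fun z : X => (‖z‖⁻¹ : 𝕜) • z) (𝓝 x) (𝓝 ((‖x‖⁻¹ : 𝕜) • x)) :=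
    ContinuousAt.tendsto (by fun_prop (disch := simpa using hx))
  refine hy.not_ge ((crawfordPhi_le_iff hy_top).2 ⟨hx, ?_⟩)
  refine numRangeNormInf_le_of_tendsto T (l := 𝓝 x ⊓ 𝓟 {z | crawfordPhi T z ≤ y})
    (hnormalize.mono_left inf_le_left)
    (((continuous_norm.tendsto x).mul_const _).mono_left inf_le_left) ?_
  filter_upwards [mem_inf_of_right (mem_principal_self _)] with z hz
  obtain ⟨hz0, hle⟩ := (crawfordPhi_le_iff hy_top).1 hz
  exact ⟨norm_smul_inv_norm hz0, hle⟩

lemma lowerSemicontinuous_crawfordPhi (hc : 0 < crawford T) :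
    LowerSemicontinuous (crawfordPhi T) := by
  intro x
  rcases eq_or_ne x 0 with rfl | hx
  · exact lowerSemicontinuousAt_crawfordPhi_zero hc
  · exact lowerSemicontinuousAt_crawfordPhi_of_ne_zero hx

end

open ENNReal Classical in
theorem phi_bddBelow_and_lowerSemicontinuous_general
    {𝕜 : Type*} [RCLike 𝕜] {X : Type*} [NormedAddCommGroup X] [NormedSpace 𝕜 X]
    (T : X →L[𝕜] X) (hc : 0 < crawford T)
    (φ : X → ℝ≥0∞)
    (hφ : ∀ x : X, φ x = if x = 0 then ⊤ else
      ENNReal.ofReal (‖x‖⁻¹ * sInf {r : ℝ | ∃ f : X →L[𝕜] 𝕜, ‖f‖ = 1 ∧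
        f ((‖x‖⁻¹ : 𝕜) • x) = 1 ∧ r = ‖f (T ((‖x‖⁻¹ : 𝕜) • x))‖})) :
    (∀ x ∈ Metric.closedBall (0 : X) 1, x ≠ 0 → ENNReal.ofReal (crawford T) ≤ φ x) ∧
    LowerSemicontinuousOn φ (Metric.closedBall (0 : X) 1) := by
  obtain rfl : φ = crawfordPhi T := funext hφ
  refine ⟨fun x hx hx0 => ?_, (lowerSemicontinuous_crawfordPhi hc).lowerSemicontinuousOn _⟩
  refine le_trans ?_ (ofReal_inv_norm_mul_crawford_le_crawfordPhi hx0)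
  gcongr
  exact le_mul_of_one_le_left hc.le (one_le_inv₀ (norm_pos_iff.2 hx0) |>.2 (by simpa using hx))

open ENNReal Classical in
theorem phi_bddBelow_and_lowerSemicontinuous
    {𝕜 : Type*} [RCLike 𝕜] {X : Type*} [NormedAddCommGroup X] [NormedSpace 𝕜 X]
    [CompleteSpace X] (T : X →L[𝕜] X) (hc : 0 < crawford T)
    (φ : X → ℝ≥0∞)
    (hφ : ∀ x : X, φ x = if x = 0 then ⊤ else
      ENNReal.ofReal (‖x‖⁻¹ * sInf {r : ℝ | ∃ f : X →L[𝕜] 𝕜, ‖f‖ = 1 ∧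
        f ((‖x‖⁻¹ : 𝕜) • x) = 1 ∧ r = ‖f (T ((‖x‖⁻¹ : 𝕜) • x))‖})) :
    (∀ x ∈ Metric.closedBall (0 : X) 1, x ≠ 0 → ENNReal.ofReal (crawford T) ≤ φ x) ∧
    LowerSemicontinuousOn φ (Metric.closedBall (0 : X) 1) :=
  phi_bddBelow_and_lowerSemicontinuous_general T hc φ hφ
end
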